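/- arXiv:2012.00303 — 3 statements merged into one kernel-verified Lean document; each statement's English description precedes it below -/
import Mathlib

section
/- Let D be a chord diagram and let D' be obtained from D by a first move (adding an isolated chord). Then tr(D') = tr(D). (Chord-diagram form of Theorem 1(1): the trivializing number of a knot projection is invariant under the first flat Reidemeister move.) -/
open scoped Classical

/-- Two chords of a chord diagram on the points `0 < 1 < ⋯ < N-1` (in this cyclic
order) cross if their endpoints interleave. -/
def Crosses {N : ℕ} (c d : Sym2 (Fin N)) : Prop :=
  ∃ a b x y : Fin N, a < x ∧ x < b ∧ b < y ∧
    ((c = s(a, b) ∧ d = s(x, y)) ∨ (c = s(x, y) ∧ d = s(a, b)))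

/-- A chord diagram of order `n`: a partition of the `2n` points `0, 1, …, 2n-1`
(in this cyclic order on a circle) into `n` unordered pairs, the chords. -/
structure ChordDiagram (n : ℕ) where
  chords : Finset (Sym2 (Fin (2 * n)))
  not_diag : ∀ c ∈ chords, ¬ c.IsDiag
  cover : ∀ x : Fin (2 * n), ∃! c, c ∈ chords ∧ x ∈ c

/-- The trivializing number: the minimum number of chords whose deletion yields a
trivial chord diagram (one with no two crossing chords). -/
noncomputable def tr {n : ℕ} (D : ChordDiagram n) : ℕ :=
  sInf {k | ∃ S ⊆ D.chords, S.card = k ∧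
    ∀ c ∈ D.chords \ S, ∀ d ∈ D.chords \ S, ¬ Crosses c d}

/-- The cross chord number: the number of unordered pairs of chords that cross. -/
noncomputable def Xnum {n : ℕ} (D : ChordDiagram n) : ℕ :=
  ((D.chords ×ˢ D.chords).filter fun p => Crosses p.1 p.2).card / 2

/-- Two points are cyclically adjacent on the circle `0, 1, …, N-1`. -/
def Adjacent {N : ℕ} (p q : Fin N) : Prop :=
  (p.val + 1) % N = q.val ∨ (q.val + 1) % N = p.val

/-- The ternary cyclic-order relation on the points `0, 1, …, N-1`. -/
def CyclicBtw {N : ℕ} (a b c : Fin N) : Prop :=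
  (a < b ∧ b < c) ∨ (b < c ∧ c < a) ∨ (c < a ∧ a < b)

/-- A first move (first flat Reidemeister move): `D'` is obtained from `D` by
adding an isolated chord. -/
def FirstMove {n : ℕ} (D : ChordDiagram n) (D' : ChordDiagram (n + 1)) : Prop :=
  ∃ ι : Fin (2 * n) → Fin (2 * (n + 1)),
    Function.Injective ι ∧
    (∀ a b c, CyclicBtw a b c → CyclicBtw (ι a) (ι b) (ι c)) ∧
    (∀ ch ∈ D.chords, ch.map ι ∈ D'.chords) ∧
    ∃ p q : Fin (2 * (n + 1)), Adjacent p q ∧ s(p, q) ∈ D'.chords ∧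
      ∀ x, x ∉ Set.range ι ↔ (x = p ∨ x = q)

/-- A triple move with distinguished pairs `A = {a₁, a₂}`, `B = {b₁, b₂}`,
`C = {c₁, c₂}` of cyclically adjacent points and distinguished chords
`s(a₁, b₁)`, `s(a₂, c₁)`, `s(b₂, c₂)`: `D'` is obtained from `D` by transposing
the two points of each of `A`, `B`, `C`. -/
def TripleMoveAt {n : ℕ} (D D' : ChordDiagram n)
    (a₁ a₂ b₁ b₂ c₁ c₂ : Fin (2 * n)) : Prop :=
  Adjacent a₁ a₂ ∧ Adjacent b₁ b₂ ∧ Adjacent c₁ c₂ ∧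
  ([a₁, a₂, b₁, b₂, c₁, c₂].Pairwise (· ≠ ·)) ∧
  s(a₁, b₁) ∈ D.chords ∧ s(a₂, c₁) ∈ D.chords ∧ s(b₂, c₂) ∈ D.chords ∧
  D'.chords = D.chords.image
    (Sym2.map (Equiv.swap a₁ a₂ * Equiv.swap b₁ b₂ * Equiv.swap c₁ c₂))

/-- Three chords pairwise cross. -/
def PairwiseCross {N : ℕ} (x y z : Sym2 (Fin N)) : Prop :=
  Crosses x y ∧ Crosses x z ∧ Crosses y z

/-- Exactly one of the three pairs among three chords crosses. -/
def ExactlyOneCross {N : ℕ} (x y z : Sym2 (Fin N)) : Prop :=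
  (Crosses x y ∧ ¬ Crosses x z ∧ ¬ Crosses y z) ∨
  (¬ Crosses x y ∧ Crosses x z ∧ ¬ Crosses y z) ∨
  (¬ Crosses x y ∧ ¬ Crosses x z ∧ Crosses y z)

/-- A strong third move: a triple move whose three distinguished chords pairwise
cross in `D`, or whose three replacement chords pairwise cross in `D'`. -/
def StrongThirdMove {n : ℕ} (D D' : ChordDiagram n) : Prop :=
  ∃ a₁ a₂ b₁ b₂ c₁ c₂, TripleMoveAt D D' a₁ a₂ b₁ b₂ c₁ c₂ ∧
    (PairwiseCross s(a₁, b₁) s(a₂, c₁) s(b₂, c₂) ∨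
     PairwiseCross s(a₂, b₂) s(a₁, c₂) s(b₁, c₁))

/-- A weak third move: a triple move such that exactly one pair of the three
distinguished chords crosses in `D`, or exactly one pair of the three
replacement chords crosses in `D'`. -/
def WeakThirdMove {n : ℕ} (D D' : ChordDiagram n) : Prop :=
  ∃ a₁ a₂ b₁ b₂ c₁ c₂, TripleMoveAt D D' a₁ a₂ b₁ b₂ c₁ c₂ ∧
    (ExactlyOneCross s(a₁, b₁) s(a₂, c₁) s(b₂, c₂) ∨
     ExactlyOneCross s(a₂, b₂) s(a₁, c₂) s(b₁, c₁))


lemma crosses_symm {N : ℕ} {c d : Sym2 (Fin N)} (h : Crosses c d) : Crosses d c := by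
  obtain ⟨a, b, x, y, h1, h2, h3, hc | hc⟩ := h
  · exact ⟨a, b, x, y, h1, h2, h3, Or.inr ⟨hc.2, hc.1⟩⟩
  · exact ⟨a, b, x, y, h1, h2, h3, Or.inl ⟨hc.2, hc.1⟩⟩

/-- The eight linear-order configurations in which `{u,w}` and `{v,z}` interleave. -/
def Rot {N : ℕ} (u v w z : Fin N) : Prop :=
  (u < v ∧ v < w ∧ w < z) ∨ (v < w ∧ w < z ∧ z < u) ∨
  (w < z ∧ z < u ∧ u < v) ∨ (z < u ∧ u < v ∧ v < w) ∨
  (u < z ∧ z < w ∧ w < v) ∨ (z < w ∧ w < v ∧ v < u) ∨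
  (w < v ∧ v < u ∧ u < z) ∨ (v < u ∧ u < z ∧ z < w)

lemma crosses_of_rot {N : ℕ} {u v w z : Fin N} (h : Rot u v w z) :
    Crosses s(u, w) s(v, z) := by
  rcases h with ⟨a1,a2,a3⟩|⟨a1,a2,a3⟩|⟨a1,a2,a3⟩|⟨a1,a2,a3⟩|⟨a1,a2,a3⟩|⟨a1,a2,a3⟩|⟨a1,a2,a3⟩|⟨a1,a2,a3⟩
  · exact ⟨u, w, v, z, a1, a2, a3, Or.inl ⟨rfl, rfl⟩⟩
  · exact ⟨v, z, w, u, a1, a2, a3, Or.inr ⟨Sym2.eq_swap, rfl⟩⟩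
  · exact ⟨w, u, z, v, a1, a2, a3, Or.inl ⟨Sym2.eq_swap, Sym2.eq_swap⟩⟩
  · exact ⟨z, v, u, w, a1, a2, a3, Or.inr ⟨rfl, Sym2.eq_swap⟩⟩
  · exact ⟨u, w, z, v, a1, a2, a3, Or.inl ⟨rfl, Sym2.eq_swap⟩⟩
  · exact ⟨z, v, w, u, a1, a2, a3, Or.inr ⟨Sym2.eq_swap, Sym2.eq_swap⟩⟩
  · exact ⟨w, u, v, z, a1, a2, a3, Or.inl ⟨Sym2.eq_swap, rfl⟩⟩
  · exact ⟨v, z, u, w, a1, a2, a3, Or.inr ⟨rfl, rfl⟩⟩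

lemma rot_of_crosses {N : ℕ} {u v w z : Fin N} (h : Crosses s(u, w) s(v, z)) :
    Rot u v w z := by
  obtain ⟨a, b, x, y, h1, h2, h3, hc⟩ := h
  unfold Rot
  rcases hc with ⟨hc, hd⟩ | ⟨hc, hd⟩ <;> rw [Sym2.eq_iff] at hc hd <;>
    rcases hc with ⟨rfl, rfl⟩ | ⟨rfl, rfl⟩ <;>
    rcases hd with ⟨rfl, rfl⟩ | ⟨rfl, rfl⟩
  · exact Or.inl ⟨h1, h2, h3⟩
  · exact Or.inr (Or.inr (Or.inr (Or.inr (Or.inl ⟨h1, h2, h3⟩))))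
  · exact Or.inr (Or.inr (Or.inr (Or.inr (Or.inr (Or.inr (Or.inl ⟨h1, h2, h3⟩))))))
  · exact Or.inr (Or.inr (Or.inl ⟨h1, h2, h3⟩))
  · exact Or.inr (Or.inr (Or.inr (Or.inr (Or.inr (Or.inr (Or.inr ⟨h1, h2, h3⟩))))))
  · exact Or.inr (Or.inr (Or.inr (Or.inl ⟨h1, h2, h3⟩)))
  · exact Or.inr (Or.inl ⟨h1, h2, h3⟩)
  · exact Or.inr (Or.inr (Or.inr (Or.inr (Or.inr (Or.inl ⟨h1, h2, h3⟩)))))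

/-- Separation form: `v` and `z` lie on opposite arcs determined by `u` and `w`. -/
def ArcSep {N : ℕ} (u v w z : Fin N) : Prop :=
  (CyclicBtw u v w ∧ CyclicBtw w z u) ∨ (CyclicBtw u z w ∧ CyclicBtw w v u)

lemma arcSep_of_rot {N : ℕ} {u v w z : Fin N} (h : Rot u v w z) : ArcSep u v w z := by
  unfold Rot at h
  unfold ArcSep CyclicBtw
  rcases h with ⟨a1,a2,a3⟩|⟨a1,a2,a3⟩|⟨a1,a2,a3⟩|⟨a1,a2,a3⟩|⟨a1,a2,a3⟩|⟨a1,a2,a3⟩|⟨a1,a2,a3⟩|⟨a1,a2,a3⟩ <;>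
    simp only [Fin.lt_def] at * <;> omega

lemma rot_of_arcSep {N : ℕ} {u v w z : Fin N} (h : ArcSep u v w z) : Rot u v w z := by
  unfold ArcSep CyclicBtw at h
  unfold Rot
  rcases h with ⟨b1 | b1 | b1, b2 | b2 | b2⟩ | ⟨b1 | b1 | b1, b2 | b2 | b2⟩ <;>
    [skip; skip; skip; skip; skip; skip; skip; skip; skip;
     skip; skip; skip; skip; skip; skip; skip; skip; skip] <;>
    · obtain ⟨x1, x2⟩ := b1
      obtain ⟨y1, y2⟩ := b2
      simp only [Fin.lt_def] at x1 x2 y1 y2 ⊢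
      omega

lemma crosses_iff_arcSep {N : ℕ} {u v w z : Fin N} :
    Crosses s(u, w) s(v, z) ↔ ArcSep u v w z :=
  ⟨fun h => arcSep_of_rot (rot_of_crosses h), fun h => crosses_of_rot (rot_of_arcSep h)⟩

lemma cyclicBtw_rot {N : ℕ} {a b c : Fin N} (h : CyclicBtw a b c) : CyclicBtw b c a := by
  unfold CyclicBtw at *; tauto

lemma cyclicBtw_asymm {N : ℕ} {a b c : Fin N} (h : CyclicBtw a b c) :
    ¬ CyclicBtw a c b := by
  unfold CyclicBtw at *
  rcases h with ⟨h1, h2⟩ | ⟨h1, h2⟩ | ⟨h1, h2⟩ <;>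
    rintro (⟨g1, g2⟩ | ⟨g1, g2⟩ | ⟨g1, g2⟩) <;>
    simp only [Fin.lt_def] at * <;> omega

lemma not_cyclicBtw_aab {N : ℕ} (a b : Fin N) : ¬ CyclicBtw a a b := by
  unfold CyclicBtw
  rintro (⟨g1, g2⟩ | ⟨g1, g2⟩ | ⟨g1, g2⟩) <;> simp only [Fin.lt_def] at * <;> omega

lemma not_cyclicBtw_abb {N : ℕ} (a b : Fin N) : ¬ CyclicBtw a b b := by
  unfold CyclicBtw
  rintro (⟨g1, g2⟩ | ⟨g1, g2⟩ | ⟨g1, g2⟩) <;> simp only [Fin.lt_def] at * <;> omega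

lemma not_cyclicBtw_aba {N : ℕ} (a b : Fin N) : ¬ CyclicBtw a b a := by
  unfold CyclicBtw
  rintro (⟨g1, g2⟩ | ⟨g1, g2⟩ | ⟨g1, g2⟩) <;> simp only [Fin.lt_def] at * <;> omega

lemma cyclicBtw_total {N : ℕ} {a b c : Fin N} (hab : a ≠ b) (hac : a ≠ c) (hbc : b ≠ c) :
    CyclicBtw a b c ∨ CyclicBtw a c b := by
  have d1 : a.val ≠ b.val := fun e => hab (Fin.val_injective e)
  have d2 : a.val ≠ c.val := fun e => hac (Fin.val_injective e)
  have d3 : b.val ≠ c.val := fun e => hbc (Fin.val_injective e)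
  unfold CyclicBtw
  simp only [Fin.lt_def]
  omega

lemma crosses_map {M M' : ℕ} {ι : Fin M → Fin M'}
    (hcyc : ∀ a b c, CyclicBtw a b c → CyclicBtw (ι a) (ι b) (ι c))
    {c d : Sym2 (Fin M)} (h : Crosses c d) : Crosses (c.map ι) (d.map ι) := by
  induction c using Sym2.ind with
  | _ u w =>
    induction d using Sym2.ind with
    | _ v z =>
      rw [Sym2.map_pair_eq, Sym2.map_pair_eq]
      rw [crosses_iff_arcSep] at h ⊢
      rcases h with ⟨h1, h2⟩ | ⟨h1, h2⟩
      · exact Or.inl ⟨hcyc _ _ _ h1, hcyc _ _ _ h2⟩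
      · exact Or.inr ⟨hcyc _ _ _ h1, hcyc _ _ _ h2⟩

lemma crosses_reflect {M M' : ℕ} {ι : Fin M → Fin M'} (hinj : Function.Injective ι)
    (hcyc : ∀ a b c, CyclicBtw a b c → CyclicBtw (ι a) (ι b) (ι c))
    {c d : Sym2 (Fin M)} (h : Crosses (c.map ι) (d.map ι)) : Crosses c d := by
  induction c using Sym2.ind with
  | _ u w =>
    induction d using Sym2.ind with
    | _ v z =>
      rw [Sym2.map_pair_eq, Sym2.map_pair_eq, crosses_iff_arcSep] at h
      rw [crosses_iff_arcSep]
      by_cases e1 : u = v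
      · subst e1
        rcases h with ⟨h1, _⟩ | ⟨_, h2⟩
        · exact absurd h1 (not_cyclicBtw_aab _ _)
        · exact absurd h2 (not_cyclicBtw_abb _ _)
      by_cases e2 : u = w
      · subst e2
        rcases h with ⟨h1, _⟩ | ⟨h1, _⟩
        · exact absurd h1 (not_cyclicBtw_aba _ _)
        · exact absurd h1 (not_cyclicBtw_aba _ _)
      by_cases e3 : v = w
      · subst e3
        rcases h with ⟨h1, _⟩ | ⟨_, h2⟩
        · exact absurd h1 (not_cyclicBtw_abb _ _)
        · exact absurd h2 (not_cyclicBtw_aab _ _)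
      by_cases e4 : w = z
      · subst e4
        rcases h with ⟨_, h2⟩ | ⟨h1, _⟩
        · exact absurd h2 (not_cyclicBtw_aab _ _)
        · exact absurd h1 (not_cyclicBtw_abb _ _)
      by_cases e5 : u = z
      · subst e5
        rcases h with ⟨_, h2⟩ | ⟨h1, _⟩
        · exact absurd h2 (not_cyclicBtw_abb _ _)
        · exact absurd h1 (not_cyclicBtw_aab _ _)
      have t1 : CyclicBtw u v w ∨ CyclicBtw u w v := cyclicBtw_total e1 e2 e3
      have t2 : CyclicBtw w z u ∨ CyclicBtw w u z :=
        cyclicBtw_total e4 (Ne.symm e2) (fun e => e5 e.symm)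
      rcases t1 with c1 | c1 <;> rcases t2 with c2 | c2
      · exact Or.inl ⟨c1, c2⟩
      · -- c1 : u v w,  c2 : w u z : contradiction with h
        exfalso
        rcases h with ⟨_, s2⟩ | ⟨_, s2⟩
        · exact cyclicBtw_asymm (hcyc _ _ _ c2) s2
        · exact cyclicBtw_asymm (cyclicBtw_rot (cyclicBtw_rot (hcyc _ _ _ c1))) s2
      · -- c1 : u w v, c2 : w z u : contradiction
        exfalso
        rcases h with ⟨s1, _⟩ | ⟨s1, _⟩
        · exact cyclicBtw_asymm (hcyc _ _ _ c1) s1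
        · exact cyclicBtw_asymm (cyclicBtw_rot (cyclicBtw_rot (hcyc _ _ _ c2))) s1
      · exact Or.inr ⟨cyclicBtw_rot c2, cyclicBtw_rot c1⟩

lemma not_crosses_adjacent {N : ℕ} {p q : Fin N} (hadj : Adjacent p q)
    {d : Sym2 (Fin N)} : ¬ Crosses s(p, q) d := by
  rintro ⟨a, b, x, y, h1, h2, h3, hc⟩
  have hyN := y.isLt
  have hbN := b.isLt
  have hadj' : p.val + 1 = q.val ∨ q.val + 1 = p.val ∨
      (p.val + 1 = N ∧ q.val = 0) ∨ (q.val + 1 = N ∧ p.val = 0) := by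
    have hpN := p.isLt; have hqN := q.isLt
    rcases hadj with hm | hm
    · rcases Nat.lt_or_ge (p.val + 1) N with hlt | hge
      · rw [Nat.mod_eq_of_lt hlt] at hm; omega
      · have e : p.val + 1 = N := by omega
        rw [e, Nat.mod_self] at hm; omega
    · rcases Nat.lt_or_ge (q.val + 1) N with hlt | hge
      · rw [Nat.mod_eq_of_lt hlt] at hm; omega
      · have e : q.val + 1 = N := by omega
        rw [e, Nat.mod_self] at hm; omega
  rcases hc with ⟨hc, -⟩ | ⟨hc, -⟩ <;> rw [Sym2.eq_iff] at hc <;>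
    rcases hc with ⟨rfl, rfl⟩ | ⟨rfl, rfl⟩ <;>
    simp only [Fin.lt_def] at h1 h2 h3 <;> omega


lemma tr_set_nonempty {m : ℕ} (E : ChordDiagram m) :
    Set.Nonempty {k | ∃ S ⊆ E.chords, S.card = k ∧
      ∀ c ∈ E.chords \ S, ∀ d ∈ E.chords \ S, ¬ Crosses c d} :=
  ⟨E.chords.card, E.chords, Finset.Subset.refl _, rfl, by simp⟩

/-- Theorem 1(1): the trivializing number is invariant under the
first move (adding an isolated chord). -/
theorem tr_invariant_of_firstMove {n : ℕ} (D : ChordDiagram n)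
    (D' : ChordDiagram (n + 1)) (h : FirstMove D D') :
    tr D' = tr D := by
  obtain ⟨ι, hinj, hcyc, hmap, p, q, hadj, hpq, hrange⟩ := h
  have hfinj : Function.Injective (Sym2.map ι) := Sym2.map.injective hinj
  have hpr : p ∉ Set.range ι := (hrange p).mpr (Or.inl rfl)
  have hclass : ∀ c' ∈ D'.chords, c' = s(p, q) ∨ ∃ ch ∈ D.chords, c' = Sym2.map ι ch := by
    intro c' hc'
    induction c' using Sym2.ind with
    | _ x y =>
      by_cases hx : x = p ∨ x = q
      · left
        obtain ⟨c0, hc0, huniq⟩ := D'.cover x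
        have e1 : s(x, y) = c0 := huniq _ ⟨hc', Sym2.mem_mk_left x y⟩
        have e2 : s(p, q) = c0 := by
          refine huniq _ ⟨hpq, ?_⟩
          rcases hx with rfl | rfl <;> simp
        rw [e1, ← e2]
      · push_neg at hx
        have hxr : x ∈ Set.range ι := by
          by_contra hcon
          rcases (hrange x).mp hcon with rfl | rfl
          · exact hx.1 rfl
          · exact hx.2 rfl
        obtain ⟨u, rfl⟩ := hxr
        obtain ⟨ch, ⟨hchm, hchu⟩, -⟩ := D.cover u
        right
        refine ⟨ch, hchm, ?_⟩
        obtain ⟨c0, hc0, huniq⟩ := D'.cover (ι u)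
        have e1 : s(ι u, y) = c0 := huniq _ ⟨hc', Sym2.mem_mk_left _ _⟩
        have e2 : Sym2.map ι ch = c0 :=
          huniq _ ⟨hmap ch hchm, Sym2.mem_map.mpr ⟨u, hchu, rfl⟩⟩
        rw [e1, ← e2]
  apply le_antisymm
  · -- tr D' ≤ tr D
    obtain ⟨S, hS, hcard, htriv⟩ := Nat.sInf_mem (tr_set_nonempty D)
    refine Nat.sInf_le ⟨S.image (Sym2.map ι), ?_, ?_, ?_⟩
    · intro c hc
      obtain ⟨ch, hch, rfl⟩ := Finset.mem_image.mp hc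
      exact hmap ch (hS hch)
    · rw [Finset.card_image_of_injective _ hfinj]; exact hcard
    · intro c hc d hd hcross
      rw [Finset.mem_sdiff] at hc hd
      rcases hclass c hc.1 with rfl | ⟨c0, hc0, rfl⟩
      · exact not_crosses_adjacent hadj hcross
      rcases hclass d hd.1 with rfl | ⟨d0, hd0, rfl⟩
      · exact not_crosses_adjacent hadj (crosses_symm hcross)
      exact htriv c0
        (Finset.mem_sdiff.mpr ⟨hc0, fun hin => hc.2 (Finset.mem_image_of_mem _ hin)⟩)
        d0
        (Finset.mem_sdiff.mpr ⟨hd0, fun hin => hd.2 (Finset.mem_image_of_mem _ hin)⟩)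
        (crosses_reflect hinj hcyc hcross)
  · -- tr D ≤ tr D'
    obtain ⟨S', hS', hcard', htriv'⟩ := Nat.sInf_mem (tr_set_nonempty D')
    have key : tr D ≤ (D.chords.filter (fun ch => Sym2.map ι ch ∈ S')).card := by
      refine Nat.sInf_le ⟨_, Finset.filter_subset _ _, rfl, ?_⟩
      intro c hc d hd hcross
      rw [Finset.mem_sdiff, Finset.mem_filter] at hc hd
      refine htriv' (Sym2.map ι c) ?_ (Sym2.map ι d) ?_ (crosses_map hcyc hcross)
      · exact Finset.mem_sdiff.mpr ⟨hmap c hc.1, fun hin => hc.2 ⟨hc.1, hin⟩⟩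
      · exact Finset.mem_sdiff.mpr ⟨hmap d hd.1, fun hin => hd.2 ⟨hd.1, hin⟩⟩
    refine key.trans ?_
    rw [show tr D' = S'.card from hcard'.symm]
    exact Finset.card_le_card_of_injOn _
      (fun ch hch => (Finset.mem_filter.mp hch).2) (hfinj.injOn)
end

section
/- Let D be a chord diagram and let D' be obtained from D by a weak third move. Then tr(D') = tr(D). (Chord-diagram form of Theorem 1(2): the trivializing number of a knot projection is invariant under the weak third flat Reidemeister move.) -/
open scoped Classical

-- ===== auxiliary machinery for the proof =====

def Ins (z u v : ℕ) : Prop := (u < z ∧ z < v) ∨ (v < z ∧ z < u)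
def NAdj (N p q : ℕ) : Prop := p+1 = q ∨ q+1 = p ∨ (p+1 = N ∧ q = 0) ∨ (q+1 = N ∧ p = 0)
def Wraps (N p q : ℕ) : Prop := (p+1 = N ∧ q = 0) ∨ (q+1 = N ∧ p = 0)

lemma crosses_mk {N : ℕ} {a b x y : Fin N} (h1 : a < x) (h2 : x < b) (h3 : b < y) :
    Crosses s(a,b) s(x,y) := ⟨a,b,x,y,h1,h2,h3,Or.inl ⟨rfl,rfl⟩⟩

lemma crosses_mk' {N : ℕ} {a b x y : Fin N} (h1 : a < x) (h2 : x < b) (h3 : b < y) :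
    Crosses s(x,y) s(a,b) := ⟨a,b,x,y,h1,h2,h3,Or.inr ⟨rfl,rfl⟩⟩

lemma not_crosses_self {N : ℕ} (c : Sym2 (Fin N)) : ¬ Crosses c c := by
  rintro ⟨a,b,x,y,h1,h2,h3,(⟨hc,hd⟩|⟨hc,hd⟩)⟩ <;> rw [hc, Sym2.eq_iff] at hd <;>
    rw [Fin.lt_def] at h1 h2 h3 <;>
    rcases hd with ⟨e1,e2⟩|⟨e1,e2⟩ <;>
    · rw [Fin.ext_iff] at e1 e2; omega

lemma crosses_of_ins {N : ℕ} {u v x y : Fin N} (huv : u.val < v.val)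
    (hx : Ins x.val u.val v.val) (hy : y.val < u.val ∨ v.val < y.val) :
    Crosses s(u,v) s(x,y) := by
  have h1 : u < x := by rw [Fin.lt_def]; unfold Ins at hx; omega
  have h2 : x < v := by rw [Fin.lt_def]; unfold Ins at hx; omega
  rcases hy with hy|hy
  · rw [Sym2.eq_swap (a := x) (b := y)]
    exact crosses_mk' (a := y) (x := u) (b := x) (y := v)
      (by rw [Fin.lt_def]; omega) h1 h2
  · exact crosses_mk h1 h2 (by rw [Fin.lt_def]; omega)

lemma crosses_iff {N : ℕ} {u v x y : Fin N} (huv : u ≠ v) (hxy : x ≠ y)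
    (hux : u ≠ x) (huy : u ≠ y) (hvx : v ≠ x) (hvy : v ≠ y) :
    Crosses s(u,v) s(x,y) ↔ (Ins x.val u.val v.val ↔ ¬ Ins y.val u.val v.val) := by
  have nuv : u.val ≠ v.val := fun h => huv (Fin.ext h)
  have nxy : x.val ≠ y.val := fun h => hxy (Fin.ext h)
  have nux : u.val ≠ x.val := fun h => hux (Fin.ext h)
  have nuy : u.val ≠ y.val := fun h => huy (Fin.ext h)
  have nvx : v.val ≠ x.val := fun h => hvx (Fin.ext h)
  have nvy : v.val ≠ y.val := fun h => hvy (Fin.ext h)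
  constructor
  · rintro ⟨a,b,p,q,h1,h2,h3,(⟨hc,hd⟩|⟨hc,hd⟩)⟩ <;>
      rw [Sym2.eq_iff] at hc hd <;>
      rw [Fin.lt_def] at h1 h2 h3 <;>
      rcases hc with ⟨rfl,rfl⟩|⟨rfl,rfl⟩ <;> rcases hd with ⟨rfl,rfl⟩|⟨rfl,rfl⟩ <;>
      · unfold Ins; constructor <;> intro <;> omega
  · intro h
    rcases Nat.lt_or_ge u.val v.val with hor|hor
    · by_cases hx : Ins x.val u.val v.val
      · have hy : ¬ Ins y.val u.val v.val := h.mp hx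
        exact crosses_of_ins hor hx (by simp only [Ins] at hx hy; omega)
      · have hy : Ins y.val u.val v.val := by by_contra h'; exact hx (h.mpr h')
        rw [Sym2.eq_swap (a := x) (b := y)]
        exact crosses_of_ins hor hy (by simp only [Ins] at hx hy; omega)
    · have hor' : v.val < u.val := by omega
      rw [Sym2.eq_swap (a := u) (b := v)]
      by_cases hx : Ins x.val u.val v.val
      · have hy : ¬ Ins y.val u.val v.val := h.mp hx
        exact crosses_of_ins hor' (by simp only [Ins] at hx hy ⊢; omega)
          (by simp only [Ins] at hx hy; omega)
      · have hy : Ins y.val u.val v.val := by by_contra h'; exact hx (h.mpr h')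
        rw [Sym2.eq_swap (a := x) (b := y)]
        exact crosses_of_ins hor' (by simp only [Ins] at hx hy ⊢; omega)
          (by simp only [Ins] at hx hy; omega)

lemma adjacent_iff {N : ℕ} {p q : Fin N} : Adjacent p q ↔ NAdj N p.val q.val := by
  have hp := p.isLt; have hq := q.isLt
  simp only [Adjacent, NAdj]
  constructor
  · rintro (h|h)
    · rcases Nat.lt_or_ge (p.val+1) N with h'|h'
      · rw [Nat.mod_eq_of_lt h'] at h; omega
      · have e : p.val+1 = N := by omega
        rw [e, Nat.mod_self] at h; omega
    · rcases Nat.lt_or_ge (q.val+1) N with h'|h'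
      · rw [Nat.mod_eq_of_lt h'] at h; omega
      · have e : q.val+1 = N := by omega
        rw [e, Nat.mod_self] at h; omega
  · rintro (h|h|⟨h1,h2⟩|⟨h1,h2⟩)
    · left; rw [Nat.mod_eq_of_lt (by omega)]; exact h
    · right; rw [Nat.mod_eq_of_lt (by omega)]; exact h
    · left; rw [h1, Nat.mod_self]; omega
    · right; rw [h1, Nat.mod_self]; omega

lemma adjacent_symm {N : ℕ} {p q : Fin N} (h : Adjacent p q) : Adjacent q p := h.symm

-- ==== nat level combinatorial lemmas ====

set_option maxHeartbeats 1000000 in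
lemma pres_nat {N p p' q q' x y : ℕ}
    (hp : p < N) (hp' : p' < N) (hq : q < N) (hq' : q' < N) (hx : x < N) (hy : y < N)
    (hA : NAdj N p p') (hB : NAdj N q q')
    (h1 : x ≠ p) (h2 : x ≠ p') (h3 : x ≠ q) (h4 : x ≠ q')
    (h5 : y ≠ p) (h6 : y ≠ p') (h7 : y ≠ q) (h8 : y ≠ q') :
    ((Ins x p q ↔ ¬ Ins y p q) ↔ (Ins x p' q' ↔ ¬ Ins y p' q')) := by
  simp only [Ins, NAdj] at *; omega

set_option maxHeartbeats 8000000 in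
lemma tri1_nat {N a₁ a₂ b₁ b₂ c₁ c₂ : ℕ}
    (ha₁ : a₁ < N) (ha₂ : a₂ < N) (hb₁ : b₁ < N) (hb₂ : b₂ < N) (hc₁ : c₁ < N) (hc₂ : c₂ < N)
    (hA : NAdj N a₁ a₂) (hB : NAdj N b₁ b₂) (hC : NAdj N c₁ c₂)
    (n1 : a₁ ≠ a₂) (n2 : a₁ ≠ b₁) (n3 : a₁ ≠ b₂) (n4 : a₁ ≠ c₁) (n5 : a₁ ≠ c₂)
    (n6 : a₂ ≠ b₁) (n7 : a₂ ≠ b₂) (n8 : a₂ ≠ c₁) (n9 : a₂ ≠ c₂)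
    (n10 : b₁ ≠ b₂) (n11 : b₁ ≠ c₁) (n12 : b₁ ≠ c₂)
    (n13 : b₂ ≠ c₁) (n14 : b₂ ≠ c₂) (n15 : c₁ ≠ c₂) :
    ((Ins a₂ a₁ b₁ ↔ ¬ Ins c₁ a₁ b₁) ↔ ¬ (Ins a₁ a₂ b₂ ↔ ¬ Ins c₂ a₂ b₂)) := by
  simp only [Ins, NAdj] at *; omega

set_option maxHeartbeats 8000000 in
lemma tri2_nat {N a₁ a₂ b₁ b₂ c₁ c₂ : ℕ}
    (ha₁ : a₁ < N) (ha₂ : a₂ < N) (hb₁ : b₁ < N) (hb₂ : b₂ < N) (hc₁ : c₁ < N) (hc₂ : c₂ < N)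
    (hA : NAdj N a₁ a₂) (hB : NAdj N b₁ b₂) (hC : NAdj N c₁ c₂)
    (n1 : a₁ ≠ a₂) (n2 : a₁ ≠ b₁) (n3 : a₁ ≠ b₂) (n4 : a₁ ≠ c₁) (n5 : a₁ ≠ c₂)
    (n6 : a₂ ≠ b₁) (n7 : a₂ ≠ b₂) (n8 : a₂ ≠ c₁) (n9 : a₂ ≠ c₂)
    (n10 : b₁ ≠ b₂) (n11 : b₁ ≠ c₁) (n12 : b₁ ≠ c₂)
    (n13 : b₂ ≠ c₁) (n14 : b₂ ≠ c₂) (n15 : c₁ ≠ c₂) :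
    ((Ins b₂ a₁ b₁ ↔ ¬ Ins c₂ a₁ b₁) ↔ ¬ (Ins b₁ a₂ b₂ ↔ ¬ Ins c₁ a₂ b₂)) := by
  simp only [Ins, NAdj] at *; omega

set_option maxHeartbeats 8000000 in
lemma tri3_nat {N a₁ a₂ b₁ b₂ c₁ c₂ : ℕ}
    (ha₁ : a₁ < N) (ha₂ : a₂ < N) (hb₁ : b₁ < N) (hb₂ : b₂ < N) (hc₁ : c₁ < N) (hc₂ : c₂ < N)
    (hA : NAdj N a₁ a₂) (hB : NAdj N b₁ b₂) (hC : NAdj N c₁ c₂)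
    (n1 : a₁ ≠ a₂) (n2 : a₁ ≠ b₁) (n3 : a₁ ≠ b₂) (n4 : a₁ ≠ c₁) (n5 : a₁ ≠ c₂)
    (n6 : a₂ ≠ b₁) (n7 : a₂ ≠ b₂) (n8 : a₂ ≠ c₁) (n9 : a₂ ≠ c₂)
    (n10 : b₁ ≠ b₂) (n11 : b₁ ≠ c₁) (n12 : b₁ ≠ c₂)
    (n13 : b₂ ≠ c₁) (n14 : b₂ ≠ c₂) (n15 : c₁ ≠ c₂) :
    ((Ins b₂ a₂ c₁ ↔ ¬ Ins c₂ a₂ c₁) ↔ ¬ (Ins b₁ a₁ c₂ ↔ ¬ Ins c₁ a₁ c₂)) := by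
  simp only [Ins, NAdj] at *; omega

lemma ins_xor {z u v : ℕ} (h1 : z ≠ u) (h2 : z ≠ v) :
    Ins z u v ↔ ¬ ((z < u) ↔ (z < v)) := by
  simp only [Ins]; constructor
  · intro h; omega
  · intro h; by_cases h' : z < u <;> omega

lemma pairx {N p q z : ℕ} (hp : p < N) (hq : q < N) (hz : z < N) (hA : NAdj N p q)
    (h1 : z ≠ p) (h2 : z ≠ q) : ((z < p) ↔ (z < q)) ↔ ¬ Wraps N p q := by
  simp only [NAdj, Wraps] at *
  constructor
  · intro h; omega
  · intro h; by_cases h' : z < p <;> omega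

set_option maxHeartbeats 4000000 in
lemma asm (X1 X2 X3 X4 X5 X6 WA WB WC : Prop)
    (hA : (X1 ↔ X2) ↔ ¬WA) (hB : (X3 ↔ X4) ↔ ¬WB) (hC : (X5 ↔ X6) ↔ ¬WC) :
    (¬(X1 ↔ X3) ↔ (¬(X2 ↔ X5) ↔ ¬(X4 ↔ X6))) ↔ (WA ↔ (WB ↔ WC)) := by
  by_cases hwa : WA <;> by_cases hwb : WB <;> by_cases hwc : WC <;>
    simp only [hwa, hwb, hwc, iff_true, iff_false, not_true, not_false_iff,
      true_iff, false_iff, not_not] at hA hB hC ⊢ <;> tauto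

set_option maxHeartbeats 4000000 in
lemma xor_final (I1 I2 I3 J1 J2 J3 : Prop)
    (h : (I1 ↔ (I2 ↔ I3)) ↔ (J1 ↔ (J2 ↔ J3))) :
    ¬ ((I1 ↔ ¬J1) ↔ ((I2 ↔ ¬J2) ↔ (I3 ↔ ¬J3))) := by
  tauto

lemma parity_nat {N a₁ a₂ b₁ b₂ c₁ c₂ x y : ℕ}
    (ha₁ : a₁ < N) (ha₂ : a₂ < N) (hb₁ : b₁ < N) (hb₂ : b₂ < N) (hc₁ : c₁ < N) (hc₂ : c₂ < N)
    (hx : x < N) (hy : y < N)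
    (hA : NAdj N a₁ a₂) (hB : NAdj N b₁ b₂) (hC : NAdj N c₁ c₂)
    (m1 : x ≠ a₁) (m2 : x ≠ a₂) (m3 : x ≠ b₁) (m4 : x ≠ b₂) (m5 : x ≠ c₁) (m6 : x ≠ c₂)
    (m7 : y ≠ a₁) (m8 : y ≠ a₂) (m9 : y ≠ b₁) (m10 : y ≠ b₂) (m11 : y ≠ c₁) (m12 : y ≠ c₂) :
    ¬ ((Ins x a₁ b₁ ↔ ¬ Ins y a₁ b₁) ↔
       ((Ins x a₂ c₁ ↔ ¬ Ins y a₂ c₁) ↔ (Ins x b₂ c₂ ↔ ¬ Ins y b₂ c₂))) := by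
  have Ax : (Ins x a₁ b₁ ↔ (Ins x a₂ c₁ ↔ Ins x b₂ c₂)) ↔
      (Wraps N a₁ a₂ ↔ (Wraps N b₁ b₂ ↔ Wraps N c₁ c₂)) := by
    rw [ins_xor m1 m3, ins_xor m2 m5, ins_xor m4 m6]
    exact asm _ _ _ _ _ _ _ _ _ (pairx ha₁ ha₂ hx hA m1 m2)
      (pairx hb₁ hb₂ hx hB m3 m4) (pairx hc₁ hc₂ hx hC m5 m6)
  have Ay : (Ins y a₁ b₁ ↔ (Ins y a₂ c₁ ↔ Ins y b₂ c₂)) ↔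
      (Wraps N a₁ a₂ ↔ (Wraps N b₁ b₂ ↔ Wraps N c₁ c₂)) := by
    rw [ins_xor m7 m9, ins_xor m8 m11, ins_xor m10 m12]
    exact asm _ _ _ _ _ _ _ _ _ (pairx ha₁ ha₂ hy hA m7 m8)
      (pairx hb₁ hb₂ hy hB m9 m10) (pairx hc₁ hc₂ hy hC m11 m12)
  exact xor_final _ _ _ _ _ _ (Ax.trans Ay.symm)

lemma vne {N : ℕ} {p q : Fin N} (h : p ≠ q) : p.val ≠ q.val := fun e => h (Fin.ext e)

lemma pres_fin {N : ℕ} {p p' q q' x y : Fin N} (hA : Adjacent p p') (hB : Adjacent q q')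
    (hpq : p ≠ q) (hpq' : p' ≠ q') (hxy : x ≠ y)
    (d1 : p ≠ x) (d2 : p ≠ y) (d3 : q ≠ x) (d4 : q ≠ y)
    (d5 : p' ≠ x) (d6 : p' ≠ y) (d7 : q' ≠ x) (d8 : q' ≠ y) :
    Crosses s(p,q) s(x,y) ↔ Crosses s(p',q') s(x,y) := by
  rw [crosses_iff hpq hxy d1 d2 d3 d4, crosses_iff hpq' hxy d5 d6 d7 d8]
  exact pres_nat p.isLt p'.isLt q.isLt q'.isLt x.isLt y.isLt
    (adjacent_iff.mp hA) (adjacent_iff.mp hB)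
    (vne d1.symm) (vne d5.symm) (vne d3.symm) (vne d7.symm)
    (vne d2.symm) (vne d6.symm) (vne d4.symm) (vne d8.symm)

section TriFin
variable {N : ℕ} {a₁ a₂ b₁ b₂ c₁ c₂ : Fin N}

lemma tri1_fin (hA : Adjacent a₁ a₂) (hB : Adjacent b₁ b₂) (hC : Adjacent c₁ c₂)
    (n1 : a₁ ≠ a₂) (n2 : a₁ ≠ b₁) (n3 : a₁ ≠ b₂) (n4 : a₁ ≠ c₁) (n5 : a₁ ≠ c₂)
    (n6 : a₂ ≠ b₁) (n7 : a₂ ≠ b₂) (n8 : a₂ ≠ c₁) (n9 : a₂ ≠ c₂)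
    (n10 : b₁ ≠ b₂) (n11 : b₁ ≠ c₁) (n12 : b₁ ≠ c₂)
    (n13 : b₂ ≠ c₁) (n14 : b₂ ≠ c₂) (n15 : c₁ ≠ c₂) :
    Crosses s(a₁,b₁) s(a₂,c₁) ↔ ¬ Crosses s(a₂,b₂) s(a₁,c₂) := by
  rw [crosses_iff n2 n8 n1 n4 n6.symm n11, crosses_iff n7 n5 n1.symm n9 n3.symm n14]
  exact tri1_nat a₁.isLt a₂.isLt b₁.isLt b₂.isLt c₁.isLt c₂.isLt
    (adjacent_iff.mp hA) (adjacent_iff.mp hB) (adjacent_iff.mp hC)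
    (vne n1) (vne n2) (vne n3) (vne n4) (vne n5) (vne n6) (vne n7) (vne n8)
    (vne n9) (vne n10) (vne n11) (vne n12) (vne n13) (vne n14) (vne n15)

lemma tri2_fin (hA : Adjacent a₁ a₂) (hB : Adjacent b₁ b₂) (hC : Adjacent c₁ c₂)
    (n1 : a₁ ≠ a₂) (n2 : a₁ ≠ b₁) (n3 : a₁ ≠ b₂) (n4 : a₁ ≠ c₁) (n5 : a₁ ≠ c₂)
    (n6 : a₂ ≠ b₁) (n7 : a₂ ≠ b₂) (n8 : a₂ ≠ c₁) (n9 : a₂ ≠ c₂)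
    (n10 : b₁ ≠ b₂) (n11 : b₁ ≠ c₁) (n12 : b₁ ≠ c₂)
    (n13 : b₂ ≠ c₁) (n14 : b₂ ≠ c₂) (n15 : c₁ ≠ c₂) :
    Crosses s(a₁,b₁) s(b₂,c₂) ↔ ¬ Crosses s(a₂,b₂) s(b₁,c₁) := by
  rw [crosses_iff n2 n14 n3 n5 n10 n12, crosses_iff n7 n11 n6 n8 n10.symm n13]
  exact tri2_nat a₁.isLt a₂.isLt b₁.isLt b₂.isLt c₁.isLt c₂.isLt
    (adjacent_iff.mp hA) (adjacent_iff.mp hB) (adjacent_iff.mp hC)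
    (vne n1) (vne n2) (vne n3) (vne n4) (vne n5) (vne n6) (vne n7) (vne n8)
    (vne n9) (vne n10) (vne n11) (vne n12) (vne n13) (vne n14) (vne n15)

lemma tri3_fin (hA : Adjacent a₁ a₂) (hB : Adjacent b₁ b₂) (hC : Adjacent c₁ c₂)
    (n1 : a₁ ≠ a₂) (n2 : a₁ ≠ b₁) (n3 : a₁ ≠ b₂) (n4 : a₁ ≠ c₁) (n5 : a₁ ≠ c₂)
    (n6 : a₂ ≠ b₁) (n7 : a₂ ≠ b₂) (n8 : a₂ ≠ c₁) (n9 : a₂ ≠ c₂)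
    (n10 : b₁ ≠ b₂) (n11 : b₁ ≠ c₁) (n12 : b₁ ≠ c₂)
    (n13 : b₂ ≠ c₁) (n14 : b₂ ≠ c₂) (n15 : c₁ ≠ c₂) :
    Crosses s(a₂,c₁) s(b₂,c₂) ↔ ¬ Crosses s(a₁,c₂) s(b₁,c₁) := by
  rw [crosses_iff n8 n14 n7 n9 n13.symm n15, crosses_iff n5 n11 n2 n4 n12.symm n15.symm]
  exact tri3_nat a₁.isLt a₂.isLt b₁.isLt b₂.isLt c₁.isLt c₂.isLt
    (adjacent_iff.mp hA) (adjacent_iff.mp hB) (adjacent_iff.mp hC)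
    (vne n1) (vne n2) (vne n3) (vne n4) (vne n5) (vne n6) (vne n7) (vne n8)
    (vne n9) (vne n10) (vne n11) (vne n12) (vne n13) (vne n14) (vne n15)

lemma parity_fin {x y : Fin N} (hA : Adjacent a₁ a₂) (hB : Adjacent b₁ b₂) (hC : Adjacent c₁ c₂)
    (n2 : a₁ ≠ b₁) (n8 : a₂ ≠ c₁) (n14 : b₂ ≠ c₂) (hxy : x ≠ y)
    (m1 : x ≠ a₁) (m2 : x ≠ a₂) (m3 : x ≠ b₁) (m4 : x ≠ b₂) (m5 : x ≠ c₁) (m6 : x ≠ c₂)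
    (m7 : y ≠ a₁) (m8 : y ≠ a₂) (m9 : y ≠ b₁) (m10 : y ≠ b₂) (m11 : y ≠ c₁) (m12 : y ≠ c₂) :
    ¬ (Crosses s(a₁,b₁) s(x,y) ↔ (Crosses s(a₂,c₁) s(x,y) ↔ Crosses s(b₂,c₂) s(x,y))) := by
  rw [crosses_iff n2 hxy m1.symm m7.symm m3.symm m9.symm,
    crosses_iff n8 hxy m2.symm m8.symm m5.symm m11.symm,
    crosses_iff n14 hxy m4.symm m10.symm m6.symm m12.symm]
  exact parity_nat a₁.isLt a₂.isLt b₁.isLt b₂.isLt c₁.isLt c₂.isLt x.isLt y.isLt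
    (adjacent_iff.mp hA) (adjacent_iff.mp hB) (adjacent_iff.mp hC)
    (vne m1) (vne m2) (vne m3) (vne m4) (vne m5) (vne m6)
    (vne m7) (vne m8) (vne m9) (vne m10) (vne m11) (vne m12)

end TriFin



lemma pw6 {α : Type*} {p1 p2 p3 p4 p5 p6 : α} (h : [p1,p2,p3,p4,p5,p6].Pairwise (· ≠ ·)) :
    p1≠p2 ∧ p1≠p3 ∧ p1≠p4 ∧ p1≠p5 ∧ p1≠p6 ∧ p2≠p3 ∧ p2≠p4 ∧ p2≠p5 ∧ p2≠p6 ∧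
    p3≠p4 ∧ p3≠p5 ∧ p3≠p6 ∧ p4≠p5 ∧ p4≠p6 ∧ p5≠p6 := by
  simp only [List.pairwise_cons, List.mem_cons, List.not_mem_nil, or_false,
    List.mem_singleton, forall_eq_or_imp, forall_eq, List.Pairwise.nil, and_true] at h
  tauto

lemma pw6' {α : Type*} {p1 p2 p3 p4 p5 p6 : α}
    (n1 : p1≠p2) (n2 : p1≠p3) (n3 : p1≠p4) (n4 : p1≠p5) (n5 : p1≠p6)
    (n6 : p2≠p3) (n7 : p2≠p4) (n8 : p2≠p5) (n9 : p2≠p6) (n10 : p3≠p4) (n11 : p3≠p5)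
    (n12 : p3≠p6) (n13 : p4≠p5) (n14 : p4≠p6) (n15 : p5≠p6) :
    [p1,p2,p3,p4,p5,p6].Pairwise (· ≠ ·) := by
  simp only [List.pairwise_cons, List.mem_cons, List.not_mem_nil, or_false,
    List.mem_singleton, forall_eq_or_imp, forall_eq, List.Pairwise.nil, and_true]
  tauto

lemma swap_commute {α : Type*} [DecidableEq α] {a b c d : α}
    (h1 : a ≠ c) (h2 : a ≠ d) (h3 : b ≠ c) (h4 : b ≠ d) :
    Equiv.swap a b * Equiv.swap c d = Equiv.swap c d * Equiv.swap a b := by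
  have hd : (Equiv.swap a b).Disjoint (Equiv.swap c d) := by
    intro x
    by_cases hxa : x = a
    · subst hxa; right; exact Equiv.swap_apply_of_ne_of_ne h1 h2
    by_cases hxb : x = b
    · subst hxb; right; exact Equiv.swap_apply_of_ne_of_ne h3 h4
    · left; exact Equiv.swap_apply_of_ne_of_ne hxa hxb
  exact hd.commute.eq

section PermSpec

variable {N : ℕ} {a₁ a₂ b₁ b₂ c₁ c₂ : Fin N}

lemma perm_spec
    (n1 : a₁ ≠ a₂) (n2 : a₁ ≠ b₁) (n3 : a₁ ≠ b₂) (n4 : a₁ ≠ c₁) (n5 : a₁ ≠ c₂)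
    (n6 : a₂ ≠ b₁) (n7 : a₂ ≠ b₂) (n8 : a₂ ≠ c₁) (n9 : a₂ ≠ c₂)
    (n10 : b₁ ≠ b₂) (n11 : b₁ ≠ c₁) (n12 : b₁ ≠ c₂)
    (n13 : b₂ ≠ c₁) (n14 : b₂ ≠ c₂) (n15 : c₁ ≠ c₂) :
    (Equiv.swap a₁ a₂ * Equiv.swap b₁ b₂ * Equiv.swap c₁ c₂) a₁ = a₂ ∧
    (Equiv.swap a₁ a₂ * Equiv.swap b₁ b₂ * Equiv.swap c₁ c₂) a₂ = a₁ ∧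
    (Equiv.swap a₁ a₂ * Equiv.swap b₁ b₂ * Equiv.swap c₁ c₂) b₁ = b₂ ∧
    (Equiv.swap a₁ a₂ * Equiv.swap b₁ b₂ * Equiv.swap c₁ c₂) b₂ = b₁ ∧
    (Equiv.swap a₁ a₂ * Equiv.swap b₁ b₂ * Equiv.swap c₁ c₂) c₁ = c₂ ∧
    (Equiv.swap a₁ a₂ * Equiv.swap b₁ b₂ * Equiv.swap c₁ c₂) c₂ = c₁ := by
  refine ⟨?_, ?_, ?_, ?_, ?_, ?_⟩ <;>
    simp only [Equiv.Perm.mul_apply]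
  · rw [Equiv.swap_apply_of_ne_of_ne n4 n5, Equiv.swap_apply_of_ne_of_ne n2 n3,
      Equiv.swap_apply_left]
  · rw [Equiv.swap_apply_of_ne_of_ne n8 n9, Equiv.swap_apply_of_ne_of_ne n6 n7,
      Equiv.swap_apply_right]
  · rw [Equiv.swap_apply_of_ne_of_ne n11 n12, Equiv.swap_apply_left,
      Equiv.swap_apply_of_ne_of_ne n3.symm n7.symm]
  · rw [Equiv.swap_apply_of_ne_of_ne n13 n14, Equiv.swap_apply_right,
      Equiv.swap_apply_of_ne_of_ne n2.symm n6.symm]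
  · rw [Equiv.swap_apply_left, Equiv.swap_apply_of_ne_of_ne n12.symm n14.symm,
      Equiv.swap_apply_of_ne_of_ne n5.symm n9.symm]
  · rw [Equiv.swap_apply_right, Equiv.swap_apply_of_ne_of_ne n11.symm n13.symm,
      Equiv.swap_apply_of_ne_of_ne n4.symm n8.symm]

lemma perm_fix {z : Fin N} (m1 : z ≠ a₁) (m2 : z ≠ a₂) (m3 : z ≠ b₁) (m4 : z ≠ b₂)
    (m5 : z ≠ c₁) (m6 : z ≠ c₂) :
    (Equiv.swap a₁ a₂ * Equiv.swap b₁ b₂ * Equiv.swap c₁ c₂) z = z := by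
  simp only [Equiv.Perm.mul_apply]
  rw [Equiv.swap_apply_of_ne_of_ne m5 m6, Equiv.swap_apply_of_ne_of_ne m3 m4,
    Equiv.swap_apply_of_ne_of_ne m1 m2]

end PermSpec

lemma chord_eq_of_mem {n : ℕ} {D : ChordDiagram n} {c d : Sym2 (Fin (2*n))}
    (hc : c ∈ D.chords) (hd : d ∈ D.chords) {pt : Fin (2*n)}
    (hxc : pt ∈ c) (hxd : pt ∈ d) : c = d := by
  obtain ⟨u, -, hu⟩ := D.cover pt
  rw [hu c ⟨hc, hxc⟩, hu d ⟨hd, hxd⟩]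

lemma tr_spec {n : ℕ} (D : ChordDiagram n) : ∃ S, S ⊆ D.chords ∧ S.card = tr D ∧
    ∀ c ∈ D.chords \ S, ∀ d ∈ D.chords \ S, ¬ Crosses c d := by
  have hne : {k | ∃ S ⊆ D.chords, S.card = k ∧
      ∀ c ∈ D.chords \ S, ∀ d ∈ D.chords \ S, ¬ Crosses c d}.Nonempty :=
    ⟨D.chords.card, D.chords, Finset.Subset.refl _, rfl, by simp⟩
  obtain ⟨S, h1, h2, h3⟩ := Nat.sInf_mem hne
  exact ⟨S, h1, h2, h3⟩

lemma tr_le_card {n : ℕ} {D D' : ChordDiagram n} {F : Sym2 (Fin (2*n)) → Sym2 (Fin (2*n))}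
    (heq : D'.chords = D.chords.image F) {S : Finset (Sym2 (Fin (2*n)))} (hsub : S ⊆ D.chords)
    (H : ∀ u ∈ D.chords, u ∉ S → ∀ v ∈ D.chords, v ∉ S → ¬ Crosses (F u) (F v)) :
    tr D' ≤ S.card := by
  have mem : (S.image F).card ∈ {k | ∃ T ⊆ D'.chords, T.card = k ∧
      ∀ c ∈ D'.chords \ T, ∀ d ∈ D'.chords \ T, ¬ Crosses c d} := by
    refine ⟨S.image F, ?_, rfl, ?_⟩
    · rw [heq]; exact Finset.image_subset_image hsub
    · intro e he f hf
      rw [Finset.mem_sdiff, heq, Finset.mem_image] at he hf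
      obtain ⟨⟨u, hu, rfl⟩, he2⟩ := he
      obtain ⟨⟨v, hv, rfl⟩, hf2⟩ := hf
      exact H u hu (fun h => he2 (Finset.mem_image_of_mem F h))
        v hv (fun h => hf2 (Finset.mem_image_of_mem F h))
  exact le_trans (Nat.sInf_le mem) Finset.card_image_le

lemma survive_check {n : ℕ} {D D' : ChordDiagram n}
    {F : Sym2 (Fin (2*n)) → Sym2 (Fin (2*n))}
    (heq : D'.chords = D.chords.image F)
    {ch1 ch2 ch3 : Sym2 (Fin (2*n))} {S : Finset (Sym2 (Fin (2*n)))} (hsub : S ⊆ D.chords)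
    (H12 : ch1 ∉ S → ch2 ∉ S → ¬ Crosses (F ch1) (F ch2))
    (H13 : ch1 ∉ S → ch3 ∉ S → ¬ Crosses (F ch1) (F ch3))
    (H23 : ch2 ∉ S → ch3 ∉ S → ¬ Crosses (F ch2) (F ch3))
    (Hout1 : ∀ v ∈ D.chords, v ∉ S → v ≠ ch1 → v ≠ ch2 → v ≠ ch3 → ch1 ∉ S →
      ¬ Crosses (F ch1) (F v))
    (Hout2 : ∀ v ∈ D.chords, v ∉ S → v ≠ ch1 → v ≠ ch2 → v ≠ ch3 → ch2 ∉ S →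
      ¬ Crosses (F ch2) (F v))
    (Hout3 : ∀ v ∈ D.chords, v ∉ S → v ≠ ch1 → v ≠ ch2 → v ≠ ch3 → ch3 ∉ S →
      ¬ Crosses (F ch3) (F v))
    (Hoo : ∀ u ∈ D.chords, u ∉ S → u ≠ ch1 → u ≠ ch2 → u ≠ ch3 →
           ∀ v ∈ D.chords, v ∉ S → v ≠ ch1 → v ≠ ch2 → v ≠ ch3 → ¬ Crosses (F u) (F v)) :
    tr D' ≤ S.card := by
  refine tr_le_card heq hsub ?_
  intro u hu hu' v hv hv'
  by_cases euv : u = v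
  · subst euv; exact not_crosses_self _
  by_cases eu1 : u = ch1
  · subst eu1
    by_cases ev2 : v = ch2
    · subst ev2; exact H12 hu' hv'
    by_cases ev3 : v = ch3
    · subst ev3; exact H13 hu' hv'
    · exact Hout1 v hv hv' (fun h => euv h.symm) ev2 ev3 hu'
  by_cases eu2 : u = ch2
  · subst eu2
    by_cases ev1 : v = ch1
    · subst ev1; exact fun hcr => H12 hv' hu' (crosses_symm hcr)
    by_cases ev3 : v = ch3
    · subst ev3; exact H23 hu' hv'
    · exact Hout2 v hv hv' ev1 (fun h => euv h.symm) ev3 hu'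
  by_cases eu3 : u = ch3
  · subst eu3
    by_cases ev1 : v = ch1
    · subst ev1; exact fun hcr => H13 hv' hu' (crosses_symm hcr)
    by_cases ev2 : v = ch2
    · subst ev2; exact fun hcr => H23 hv' hu' (crosses_symm hcr)
    · exact Hout3 v hv hv' ev1 ev2 (fun h => euv h.symm) hu'
  · by_cases ev1 : v = ch1
    · subst ev1; exact fun hcr => Hout1 u hu hu' eu1 eu2 eu3 hv' (crosses_symm hcr)
    by_cases ev2 : v = ch2
    · subst ev2; exact fun hcr => Hout2 u hu hu' eu1 eu2 eu3 hv' (crosses_symm hcr)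
    by_cases ev3 : v = ch3
    · subst ev3; exact fun hcr => Hout3 u hu hu' eu1 eu2 eu3 hv' (crosses_symm hcr)
    · exact Hoo u hu hu' eu1 eu2 eu3 v hv hv' ev1 ev2 ev3

set_option maxHeartbeats 3000000 in
lemma core_main {n : ℕ} {D D' : ChordDiagram n} {a₁ a₂ b₁ b₂ c₁ c₂ : Fin (2*n)}
    (htm : TripleMoveAt D D' a₁ a₂ b₁ b₂ c₁ c₂)
    (hpat : (Crosses s(a₁,b₁) s(a₂,c₁) ∧ ¬ Crosses s(a₁,b₁) s(b₂,c₂) ∧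
              ¬ Crosses s(a₂,c₁) s(b₂,c₂)) ∨
            (¬ Crosses s(a₁,b₁) s(a₂,c₁) ∧ Crosses s(a₁,b₁) s(b₂,c₂) ∧
              Crosses s(a₂,c₁) s(b₂,c₂))) :
    tr D' ≤ tr D := by
  obtain ⟨hA, hB, hC, hpw, hm1, hm2, hm3, heq⟩ := htm
  obtain ⟨n1,n2,n3,n4,n5,n6,n7,n8,n9,n10,n11,n12,n13,n14,n15⟩ := pw6 hpw
  obtain ⟨sp1,sp2,sp3,sp4,sp5,sp6⟩ :=
    perm_spec n1 n2 n3 n4 n5 n6 n7 n8 n9 n10 n11 n12 n13 n14 n15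
  have Fch1 : Sym2.map (Equiv.swap a₁ a₂ * Equiv.swap b₁ b₂ * Equiv.swap c₁ c₂) s(a₁,b₁)
      = s(a₂,b₂) := by rw [Sym2.map_pair_eq, sp1, sp3]
  have Fch2 : Sym2.map (Equiv.swap a₁ a₂ * Equiv.swap b₁ b₂ * Equiv.swap c₁ c₂) s(a₂,c₁)
      = s(a₁,c₂) := by rw [Sym2.map_pair_eq, sp2, sp5]
  have Fch3 : Sym2.map (Equiv.swap a₁ a₂ * Equiv.swap b₁ b₂ * Equiv.swap c₁ c₂) s(b₂,c₂)
      = s(b₁,c₁) := by rw [Sym2.map_pair_eq, sp4, sp6]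
  have OUTS : ∀ x y : Fin (2*n), s(x,y) ∈ D.chords → s(x,y) ≠ s(a₁,b₁) →
      s(x,y) ≠ s(a₂,c₁) → s(x,y) ≠ s(b₂,c₂) →
      (x ≠ y ∧ x ≠ a₁ ∧ x ≠ a₂ ∧ x ≠ b₁ ∧ x ≠ b₂ ∧ x ≠ c₁ ∧ x ≠ c₂ ∧
       y ≠ a₁ ∧ y ≠ a₂ ∧ y ≠ b₁ ∧ y ≠ b₂ ∧ y ≠ c₁ ∧ y ≠ c₂) := by
    intro x y hmem d1 d2 d3
    have hxy : x ≠ y := by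
      intro h
      exact D.not_diag _ hmem (by rw [h]; exact Sym2.mk_isDiag_iff.mpr rfl)
    refine ⟨hxy,
      fun h => d1 (chord_eq_of_mem hmem hm1 (pt := a₁) (by rw [← h]; simp) (by simp)),
      fun h => d2 (chord_eq_of_mem hmem hm2 (pt := a₂) (by rw [← h]; simp) (by simp)),
      fun h => d1 (chord_eq_of_mem hmem hm1 (pt := b₁) (by rw [← h]; simp) (by simp)),
      fun h => d3 (chord_eq_of_mem hmem hm3 (pt := b₂) (by rw [← h]; simp) (by simp)),
      fun h => d2 (chord_eq_of_mem hmem hm2 (pt := c₁) (by rw [← h]; simp) (by simp)),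
      fun h => d3 (chord_eq_of_mem hmem hm3 (pt := c₂) (by rw [← h]; simp) (by simp)),
      fun h => d1 (chord_eq_of_mem hmem hm1 (pt := a₁) (by rw [← h]; simp) (by simp)),
      fun h => d2 (chord_eq_of_mem hmem hm2 (pt := a₂) (by rw [← h]; simp) (by simp)),
      fun h => d1 (chord_eq_of_mem hmem hm1 (pt := b₁) (by rw [← h]; simp) (by simp)),
      fun h => d3 (chord_eq_of_mem hmem hm3 (pt := b₂) (by rw [← h]; simp) (by simp)),
      fun h => d2 (chord_eq_of_mem hmem hm2 (pt := c₁) (by rw [← h]; simp) (by simp)),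
      fun h => d3 (chord_eq_of_mem hmem hm3 (pt := c₂) (by rw [← h]; simp) (by simp))⟩
  have FFIX : ∀ x y : Fin (2*n), x ≠ a₁ → x ≠ a₂ → x ≠ b₁ → x ≠ b₂ → x ≠ c₁ → x ≠ c₂ →
      y ≠ a₁ → y ≠ a₂ → y ≠ b₁ → y ≠ b₂ → y ≠ c₁ → y ≠ c₂ →
      Sym2.map (Equiv.swap a₁ a₂ * Equiv.swap b₁ b₂ * Equiv.swap c₁ c₂) s(x,y) = s(x,y) := by
    intro x y e1 e2 e3 e4 e5 e6 e7 e8 e9 e10 e11 e12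
    rw [Sym2.map_pair_eq, perm_fix e1 e2 e3 e4 e5 e6, perm_fix e7 e8 e9 e10 e11 e12]
  obtain ⟨S, hSsub, hScard, htriv⟩ := tr_spec D
  have TR : ∀ u ∈ D.chords, u ∉ S → ∀ v ∈ D.chords, v ∉ S → ¬ Crosses u v :=
    fun u hu hu' v hv hv' =>
      htriv u (Finset.mem_sdiff.mpr ⟨hu,hu'⟩) v (Finset.mem_sdiff.mpr ⟨hv,hv'⟩)
  have G1 : ∀ v ∈ D.chords, v ≠ s(a₁,b₁) → v ≠ s(a₂,c₁) → v ≠ s(b₂,c₂) →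
      ¬ Crosses s(a₁,b₁) v →
      ¬ Crosses (Sym2.map (Equiv.swap a₁ a₂ * Equiv.swap b₁ b₂ * Equiv.swap c₁ c₂) s(a₁,b₁))
        (Sym2.map (Equiv.swap a₁ a₂ * Equiv.swap b₁ b₂ * Equiv.swap c₁ c₂) v) := by
    intro v hv d1 d2 d3 hnc
    obtain ⟨x, y, rfl⟩ : ∃ x y, v = s(x,y) := Sym2.ind (fun x y => ⟨x,y,rfl⟩) v
    obtain ⟨hxy, e1,e2,e3,e4,e5,e6,e7,e8,e9,e10,e11,e12⟩ := OUTS x y hv d1 d2 d3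
    rw [Fch1, FFIX x y e1 e2 e3 e4 e5 e6 e7 e8 e9 e10 e11 e12]
    intro hcr
    exact hnc ((pres_fin hA hB n2 n7 hxy e1.symm e7.symm e3.symm e9.symm
      e2.symm e8.symm e4.symm e10.symm).mpr hcr)
  have G2 : ∀ v ∈ D.chords, v ≠ s(a₁,b₁) → v ≠ s(a₂,c₁) → v ≠ s(b₂,c₂) →
      ¬ Crosses s(a₂,c₁) v →
      ¬ Crosses (Sym2.map (Equiv.swap a₁ a₂ * Equiv.swap b₁ b₂ * Equiv.swap c₁ c₂) s(a₂,c₁))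
        (Sym2.map (Equiv.swap a₁ a₂ * Equiv.swap b₁ b₂ * Equiv.swap c₁ c₂) v) := by
    intro v hv d1 d2 d3 hnc
    obtain ⟨x, y, rfl⟩ : ∃ x y, v = s(x,y) := Sym2.ind (fun x y => ⟨x,y,rfl⟩) v
    obtain ⟨hxy, e1,e2,e3,e4,e5,e6,e7,e8,e9,e10,e11,e12⟩ := OUTS x y hv d1 d2 d3
    rw [Fch2, FFIX x y e1 e2 e3 e4 e5 e6 e7 e8 e9 e10 e11 e12]
    intro hcr
    exact hnc ((pres_fin (adjacent_symm hA) hC n8 n5 hxy e2.symm e8.symm e5.symm e11.symm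
      e1.symm e7.symm e6.symm e12.symm).mpr hcr)
  have G3 : ∀ v ∈ D.chords, v ≠ s(a₁,b₁) → v ≠ s(a₂,c₁) → v ≠ s(b₂,c₂) →
      ¬ Crosses s(b₂,c₂) v →
      ¬ Crosses (Sym2.map (Equiv.swap a₁ a₂ * Equiv.swap b₁ b₂ * Equiv.swap c₁ c₂) s(b₂,c₂))
        (Sym2.map (Equiv.swap a₁ a₂ * Equiv.swap b₁ b₂ * Equiv.swap c₁ c₂) v) := by
    intro v hv d1 d2 d3 hnc
    obtain ⟨x, y, rfl⟩ : ∃ x y, v = s(x,y) := Sym2.ind (fun x y => ⟨x,y,rfl⟩) v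
    obtain ⟨hxy, e1,e2,e3,e4,e5,e6,e7,e8,e9,e10,e11,e12⟩ := OUTS x y hv d1 d2 d3
    rw [Fch3, FFIX x y e1 e2 e3 e4 e5 e6 e7 e8 e9 e10 e11 e12]
    intro hcr
    exact hnc ((pres_fin (adjacent_symm hB) (adjacent_symm hC) n14 n11 hxy
      e4.symm e10.symm e6.symm e12.symm e3.symm e9.symm e5.symm e11.symm).mpr hcr)
  have GOO : ∀ u ∈ D.chords, u ≠ s(a₁,b₁) → u ≠ s(a₂,c₁) → u ≠ s(b₂,c₂) →
      ∀ v ∈ D.chords, v ≠ s(a₁,b₁) → v ≠ s(a₂,c₁) → v ≠ s(b₂,c₂) →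
      ¬ Crosses u v →
      ¬ Crosses (Sym2.map (Equiv.swap a₁ a₂ * Equiv.swap b₁ b₂ * Equiv.swap c₁ c₂) u)
        (Sym2.map (Equiv.swap a₁ a₂ * Equiv.swap b₁ b₂ * Equiv.swap c₁ c₂) v) := by
    intro u hu d1 d2 d3 v hv d4 d5 d6 hnc
    obtain ⟨x, y, rfl⟩ : ∃ x y, u = s(x,y) := Sym2.ind (fun x y => ⟨x,y,rfl⟩) u
    obtain ⟨x', y', rfl⟩ : ∃ x y, v = s(x,y) := Sym2.ind (fun x y => ⟨x,y,rfl⟩) v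
    obtain ⟨hxy, e1,e2,e3,e4,e5,e6,e7,e8,e9,e10,e11,e12⟩ := OUTS x y hu d1 d2 d3
    obtain ⟨hxy', f1,f2,f3,f4,f5,f6,f7,f8,f9,f10,f11,f12⟩ := OUTS x' y' hv d4 d5 d6
    rw [FFIX x y e1 e2 e3 e4 e5 e6 e7 e8 e9 e10 e11 e12,
      FFIX x' y' f1 f2 f3 f4 f5 f6 f7 f8 f9 f10 f11 f12]
    exact hnc
  have PAR1 : ∀ v ∈ D.chords, v ≠ s(a₁,b₁) → v ≠ s(a₂,c₁) → v ≠ s(b₂,c₂) →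
      ¬ Crosses s(a₂,c₁) v → ¬ Crosses s(b₂,c₂) v → ¬ Crosses s(a₁,b₁) v := by
    intro v hv d1 d2 d3 hq hr
    obtain ⟨x, y, rfl⟩ : ∃ x y, v = s(x,y) := Sym2.ind (fun x y => ⟨x,y,rfl⟩) v
    obtain ⟨hxy, e1,e2,e3,e4,e5,e6,e7,e8,e9,e10,e11,e12⟩ := OUTS x y hv d1 d2 d3
    have := parity_fin hA hB hC n2 n8 n14 hxy e1 e2 e3 e4 e5 e6 e7 e8 e9 e10 e11 e12
    tauto
  have PAR2 : ∀ v ∈ D.chords, v ≠ s(a₁,b₁) → v ≠ s(a₂,c₁) → v ≠ s(b₂,c₂) →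
      ¬ Crosses s(a₁,b₁) v → ¬ Crosses s(b₂,c₂) v → ¬ Crosses s(a₂,c₁) v := by
    intro v hv d1 d2 d3 hp hr
    obtain ⟨x, y, rfl⟩ : ∃ x y, v = s(x,y) := Sym2.ind (fun x y => ⟨x,y,rfl⟩) v
    obtain ⟨hxy, e1,e2,e3,e4,e5,e6,e7,e8,e9,e10,e11,e12⟩ := OUTS x y hv d1 d2 d3
    have := parity_fin hA hB hC n2 n8 n14 hxy e1 e2 e3 e4 e5 e6 e7 e8 e9 e10 e11 e12
    tauto
  have PAR3 : ∀ v ∈ D.chords, v ≠ s(a₁,b₁) → v ≠ s(a₂,c₁) → v ≠ s(b₂,c₂) →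
      ¬ Crosses s(a₁,b₁) v → ¬ Crosses s(a₂,c₁) v → ¬ Crosses s(b₂,c₂) v := by
    intro v hv d1 d2 d3 hp hq
    obtain ⟨x, y, rfl⟩ : ∃ x y, v = s(x,y) := Sym2.ind (fun x y => ⟨x,y,rfl⟩) v
    obtain ⟨hxy, e1,e2,e3,e4,e5,e6,e7,e8,e9,e10,e11,e12⟩ := OUTS x y hv d1 d2 d3
    have := parity_fin hA hB hC n2 n8 n14 hxy e1 e2 e3 e4 e5 e6 e7 e8 e9 e10 e11 e12
    tauto
  have HoutG1 : ∀ v ∈ D.chords, v ∉ S → v ≠ s(a₁,b₁) → v ≠ s(a₂,c₁) → v ≠ s(b₂,c₂) →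
      s(a₁,b₁) ∉ S →
      ¬ Crosses (Sym2.map (Equiv.swap a₁ a₂ * Equiv.swap b₁ b₂ * Equiv.swap c₁ c₂) s(a₁,b₁))
        (Sym2.map (Equiv.swap a₁ a₂ * Equiv.swap b₁ b₂ * Equiv.swap c₁ c₂) v) :=
    fun v hv hv' d1 d2 d3 h1 => G1 v hv d1 d2 d3 (TR _ hm1 h1 _ hv hv')
  have HoutG2 : ∀ v ∈ D.chords, v ∉ S → v ≠ s(a₁,b₁) → v ≠ s(a₂,c₁) → v ≠ s(b₂,c₂) →
      s(a₂,c₁) ∉ S →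
      ¬ Crosses (Sym2.map (Equiv.swap a₁ a₂ * Equiv.swap b₁ b₂ * Equiv.swap c₁ c₂) s(a₂,c₁))
        (Sym2.map (Equiv.swap a₁ a₂ * Equiv.swap b₁ b₂ * Equiv.swap c₁ c₂) v) :=
    fun v hv hv' d1 d2 d3 h2 => G2 v hv d1 d2 d3 (TR _ hm2 h2 _ hv hv')
  have HoutG3 : ∀ v ∈ D.chords, v ∉ S → v ≠ s(a₁,b₁) → v ≠ s(a₂,c₁) → v ≠ s(b₂,c₂) →
      s(b₂,c₂) ∉ S →
      ¬ Crosses (Sym2.map (Equiv.swap a₁ a₂ * Equiv.swap b₁ b₂ * Equiv.swap c₁ c₂) s(b₂,c₂))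
        (Sym2.map (Equiv.swap a₁ a₂ * Equiv.swap b₁ b₂ * Equiv.swap c₁ c₂) v) :=
    fun v hv hv' d1 d2 d3 h3 => G3 v hv d1 d2 d3 (TR _ hm3 h3 _ hv hv')
  have HooG : ∀ u ∈ D.chords, u ∉ S → u ≠ s(a₁,b₁) → u ≠ s(a₂,c₁) → u ≠ s(b₂,c₂) →
      ∀ v ∈ D.chords, v ∉ S → v ≠ s(a₁,b₁) → v ≠ s(a₂,c₁) → v ≠ s(b₂,c₂) →
      ¬ Crosses (Sym2.map (Equiv.swap a₁ a₂ * Equiv.swap b₁ b₂ * Equiv.swap c₁ c₂) u)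
        (Sym2.map (Equiv.swap a₁ a₂ * Equiv.swap b₁ b₂ * Equiv.swap c₁ c₂) v) :=
    fun u hu hu' d1 d2 d3 v hv hv' d4 d5 d6 =>
      GOO u hu d1 d2 d3 v hv d4 d5 d6 (TR _ hu hu' _ hv hv')
  rcases hpat with ⟨h12,h13,h23⟩ | ⟨h12,h13,h23⟩
  · -- pattern: only (1,2) crosses in D
    have T12 : ¬ Crosses
        (Sym2.map (Equiv.swap a₁ a₂ * Equiv.swap b₁ b₂ * Equiv.swap c₁ c₂) s(a₁,b₁))
        (Sym2.map (Equiv.swap a₁ a₂ * Equiv.swap b₁ b₂ * Equiv.swap c₁ c₂) s(a₂,c₁)) := by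
      rw [Fch1, Fch2]
      exact (tri1_fin hA hB hC n1 n2 n3 n4 n5 n6 n7 n8 n9 n10 n11 n12 n13 n14 n15).mp h12
    by_cases scase : s(b₂,c₂) ∈ S ∨ (s(a₁,b₁) ∈ S ∧ s(a₂,c₁) ∈ S)
    · refine le_trans (survive_check heq hSsub (fun _ _ => T12)
        (fun h1 h3 => (scase.elim (fun s => (h3 s).elim) (fun s => (h1 s.1).elim)))
        (fun h2 h3 => (scase.elim (fun s => (h3 s).elim) (fun s => (h2 s.2).elim)))
        HoutG1 HoutG2 HoutG3 HooG) (le_of_eq hScard)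
    · push_neg at scase
      obtain ⟨s3, s12⟩ := scase
      by_cases s1 : s(a₁,b₁) ∈ S
      · have s2 : s(a₂,c₁) ∉ S := s12 s1
        -- S'' = insert ch3 (S.erase ch1)
        have hsub'' : insert (s(b₂,c₂)) (S.erase (s(a₁,b₁))) ⊆ D.chords := by
          intro t ht
          rcases Finset.mem_insert.mp ht with rfl|ht'
          · exact hm3
          · exact hSsub (Finset.mem_of_mem_erase ht')
        have houtS : ∀ v : Sym2 (Fin (2*n)),
            v ∉ insert (s(b₂,c₂)) (S.erase (s(a₁,b₁))) → v ≠ s(a₁,b₁) → v ∉ S :=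
          fun v h hne hS => h (Finset.mem_insert.mpr (Or.inr (Finset.mem_erase.mpr ⟨hne, hS⟩)))
        have hcard'' : (insert (s(b₂,c₂)) (S.erase (s(a₁,b₁)))).card ≤ S.card := by
          have k1 := Finset.card_insert_le (s(b₂,c₂)) (S.erase (s(a₁,b₁)))
          have k2 := Finset.card_erase_of_mem s1
          have k3 : 1 ≤ S.card := Finset.card_pos.mpr ⟨_, s1⟩
          omega
        refine le_trans (le_trans (survive_check heq hsub'' (fun _ _ => T12)
          (fun _ h3 => (h3 (Finset.mem_insert_self _ _)).elim)
          (fun _ h3 => (h3 (Finset.mem_insert_self _ _)).elim)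
          ?_ ?_ (fun v hv hv' d1 d2 d3 h3 => (h3 (Finset.mem_insert_self _ _)).elim)
          ?_) hcard'') (le_of_eq hScard)
        · intro v hv hv' d1 d2 d3 _
          have hvS := houtS v hv' d1
          exact G1 v hv d1 d2 d3
            (PAR1 v hv d1 d2 d3 (TR _ hm2 s2 _ hv hvS) (TR _ hm3 s3 _ hv hvS))
        · intro v hv hv' d1 d2 d3 _
          exact G2 v hv d1 d2 d3 (TR _ hm2 s2 _ hv (houtS v hv' d1))
        · intro u hu hu' d1 d2 d3 v hv hv' d4 d5 d6
          exact GOO u hu d1 d2 d3 v hv d4 d5 d6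
            (TR _ hu (houtS u hu' d1) _ hv (houtS v hv' d4))
      · by_cases s2 : s(a₂,c₁) ∈ S
        · -- S'' = insert ch3 (S.erase ch2)
          have hsub'' : insert (s(b₂,c₂)) (S.erase (s(a₂,c₁))) ⊆ D.chords := by
            intro t ht
            rcases Finset.mem_insert.mp ht with rfl|ht'
            · exact hm3
            · exact hSsub (Finset.mem_of_mem_erase ht')
          have houtS : ∀ v : Sym2 (Fin (2*n)),
              v ∉ insert (s(b₂,c₂)) (S.erase (s(a₂,c₁))) → v ≠ s(a₂,c₁) → v ∉ S :=
            fun v h hne hS => h (Finset.mem_insert.mpr (Or.inr (Finset.mem_erase.mpr ⟨hne, hS⟩)))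
          have hcard'' : (insert (s(b₂,c₂)) (S.erase (s(a₂,c₁)))).card ≤ S.card := by
            have k1 := Finset.card_insert_le (s(b₂,c₂)) (S.erase (s(a₂,c₁)))
            have k2 := Finset.card_erase_of_mem s2
            have k3 : 1 ≤ S.card := Finset.card_pos.mpr ⟨_, s2⟩
            omega
          refine le_trans (le_trans (survive_check heq hsub'' (fun _ _ => T12)
            (fun _ h3 => (h3 (Finset.mem_insert_self _ _)).elim)
            (fun _ h3 => (h3 (Finset.mem_insert_self _ _)).elim)
            ?_ ?_ (fun v hv hv' d1 d2 d3 h3 => (h3 (Finset.mem_insert_self _ _)).elim)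
            ?_) hcard'') (le_of_eq hScard)
          · intro v hv hv' d1 d2 d3 _
            exact G1 v hv d1 d2 d3 (TR _ hm1 s1 _ hv (houtS v hv' d2))
          · intro v hv hv' d1 d2 d3 _
            have hvS := houtS v hv' d2
            exact G2 v hv d1 d2 d3
              (PAR2 v hv d1 d2 d3 (TR _ hm1 s1 _ hv hvS) (TR _ hm3 s3 _ hv hvS))
          · intro u hu hu' d1 d2 d3 v hv hv' d4 d5 d6
            exact GOO u hu d1 d2 d3 v hv d4 d5 d6
              (TR _ hu (houtS u hu' d2) _ hv (houtS v hv' d5))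
        · exact absurd h12 (TR _ hm1 s1 _ hm2 s2)
  · -- pattern: (1,3) and (2,3) cross in D, (1,2) does not
    have T13 : ¬ Crosses
        (Sym2.map (Equiv.swap a₁ a₂ * Equiv.swap b₁ b₂ * Equiv.swap c₁ c₂) s(a₁,b₁))
        (Sym2.map (Equiv.swap a₁ a₂ * Equiv.swap b₁ b₂ * Equiv.swap c₁ c₂) s(b₂,c₂)) := by
      rw [Fch1, Fch3]
      exact (tri2_fin hA hB hC n1 n2 n3 n4 n5 n6 n7 n8 n9 n10 n11 n12 n13 n14 n15).mp h13
    have T23 : ¬ Crosses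
        (Sym2.map (Equiv.swap a₁ a₂ * Equiv.swap b₁ b₂ * Equiv.swap c₁ c₂) s(a₂,c₁))
        (Sym2.map (Equiv.swap a₁ a₂ * Equiv.swap b₁ b₂ * Equiv.swap c₁ c₂) s(b₂,c₂)) := by
      rw [Fch2, Fch3]
      exact (tri3_fin hA hB hC n1 n2 n3 n4 n5 n6 n7 n8 n9 n10 n11 n12 n13 n14 n15).mp h23
    by_cases scase : s(a₁,b₁) ∈ S ∨ s(a₂,c₁) ∈ S
    · refine le_trans (survive_check heq hSsub
        (fun h1 h2 => (scase.elim (fun s => (h1 s).elim) (fun s => (h2 s).elim)))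
        (fun _ _ => T13) (fun _ _ => T23)
        HoutG1 HoutG2 HoutG3 HooG) (le_of_eq hScard)
    · push_neg at scase
      obtain ⟨s1, s2⟩ := scase
      have s3 : s(b₂,c₂) ∈ S := by
        by_contra s3'
        exact TR _ hm1 s1 _ hm3 s3' h13
      -- S'' = insert ch1 (S.erase ch3)
      have hsub'' : insert (s(a₁,b₁)) (S.erase (s(b₂,c₂))) ⊆ D.chords := by
        intro t ht
        rcases Finset.mem_insert.mp ht with rfl|ht'
        · exact hm1
        · exact hSsub (Finset.mem_of_mem_erase ht')
      have houtS : ∀ v : Sym2 (Fin (2*n)),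
          v ∉ insert (s(a₁,b₁)) (S.erase (s(b₂,c₂))) → v ≠ s(b₂,c₂) → v ∉ S :=
        fun v h hne hS => h (Finset.mem_insert.mpr (Or.inr (Finset.mem_erase.mpr ⟨hne, hS⟩)))
      have hcard'' : (insert (s(a₁,b₁)) (S.erase (s(b₂,c₂)))).card ≤ S.card := by
        have k1 := Finset.card_insert_le (s(a₁,b₁)) (S.erase (s(b₂,c₂)))
        have k2 := Finset.card_erase_of_mem s3
        have k3 : 1 ≤ S.card := Finset.card_pos.mpr ⟨_, s3⟩
        omega
      refine le_trans (le_trans (survive_check heq hsub''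
        (fun h1 _ => (h1 (Finset.mem_insert_self _ _)).elim)
        (fun h1 _ => (h1 (Finset.mem_insert_self _ _)).elim)
        (fun _ _ => T23)
        (fun v hv hv' d1 d2 d3 h1 => (h1 (Finset.mem_insert_self _ _)).elim)
        ?_ ?_ ?_) hcard'') (le_of_eq hScard)
      · intro v hv hv' d1 d2 d3 _
        exact G2 v hv d1 d2 d3 (TR _ hm2 s2 _ hv (houtS v hv' d3))
      · intro v hv hv' d1 d2 d3 _
        have hvS := houtS v hv' d3
        exact G3 v hv d1 d2 d3
          (PAR3 v hv d1 d2 d3 (TR _ hm1 s1 _ hv hvS) (TR _ hm2 s2 _ hv hvS))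
      · intro u hu hu' d1 d2 d3 v hv hv' d4 d5 d6
        exact GOO u hu d1 d2 d3 v hv d4 d5 d6
          (TR _ hu (houtS u hu' d3) _ hv (houtS v hv' d6))

set_option maxHeartbeats 1000000 in
lemma tm_symm {n : ℕ} {D D' : ChordDiagram n} {a₁ a₂ b₁ b₂ c₁ c₂ : Fin (2*n)}
    (htm : TripleMoveAt D D' a₁ a₂ b₁ b₂ c₁ c₂) :
    TripleMoveAt D' D a₂ a₁ b₂ b₁ c₂ c₁ := by
  obtain ⟨hA, hB, hC, hpw, hm1, hm2, hm3, heq⟩ := htm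
  obtain ⟨n1,n2,n3,n4,n5,n6,n7,n8,n9,n10,n11,n12,n13,n14,n15⟩ := pw6 hpw
  obtain ⟨sp1,sp2,sp3,sp4,sp5,sp6⟩ :=
    perm_spec n1 n2 n3 n4 n5 n6 n7 n8 n9 n10 n11 n12 n13 n14 n15
  have hinv : ∀ z : Fin (2*n),
      (Equiv.swap a₁ a₂ * Equiv.swap b₁ b₂ * Equiv.swap c₁ c₂)
        ((Equiv.swap a₁ a₂ * Equiv.swap b₁ b₂ * Equiv.swap c₁ c₂) z) = z := by
    intro z
    by_cases h1 : z = a₁; · rw [h1, sp1, sp2]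
    by_cases h2 : z = a₂; · rw [h2, sp2, sp1]
    by_cases h3 : z = b₁; · rw [h3, sp3, sp4]
    by_cases h4 : z = b₂; · rw [h4, sp4, sp3]
    by_cases h5 : z = c₁; · rw [h5, sp5, sp6]
    by_cases h6 : z = c₂; · rw [h6, sp6, sp5]
    · rw [perm_fix h1 h2 h3 h4 h5 h6, perm_fix h1 h2 h3 h4 h5 h6]
  have hFF : (Sym2.map (Equiv.swap a₁ a₂ * Equiv.swap b₁ b₂ * Equiv.swap c₁ c₂) ∘
      Sym2.map (Equiv.swap a₁ a₂ * Equiv.swap b₁ b₂ * Equiv.swap c₁ c₂)) = id := by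
    funext e
    obtain ⟨x, y, rfl⟩ : ∃ x y, e = s(x,y) := Sym2.ind (fun x y => ⟨x,y,rfl⟩) e
    simp only [Function.comp_apply, Sym2.map_pair_eq, id_eq, hinv]
  refine ⟨adjacent_symm hA, adjacent_symm hB, adjacent_symm hC,
    pw6' n1.symm n7 n6 n9 n8 n3 n2 n5 n4 n10.symm n14 n13 n12 n11 n15.symm,
    ?_, ?_, ?_, ?_⟩
  · rw [heq]
    exact Finset.mem_image.mpr ⟨s(a₁,b₁), hm1, by rw [Sym2.map_pair_eq, sp1, sp3]⟩
  · rw [heq]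
    exact Finset.mem_image.mpr ⟨s(a₂,c₁), hm2, by rw [Sym2.map_pair_eq, sp2, sp5]⟩
  · rw [heq]
    exact Finset.mem_image.mpr ⟨s(b₂,c₂), hm3, by rw [Sym2.map_pair_eq, sp4, sp6]⟩
  · rw [Equiv.swap_comm a₂ a₁, Equiv.swap_comm b₂ b₁, Equiv.swap_comm c₂ c₁,
      heq, Finset.image_image, hFF, Finset.image_id]

set_option maxHeartbeats 1000000 in
lemma relabel13 {n : ℕ} {D D' : ChordDiagram n} {a₁ a₂ b₁ b₂ c₁ c₂ : Fin (2*n)}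
    (htm : TripleMoveAt D D' a₁ a₂ b₁ b₂ c₁ c₂) :
    TripleMoveAt D D' b₁ b₂ a₁ a₂ c₂ c₁ := by
  obtain ⟨hA, hB, hC, hpw, hm1, hm2, hm3, heq⟩ := htm
  obtain ⟨n1,n2,n3,n4,n5,n6,n7,n8,n9,n10,n11,n12,n13,n14,n15⟩ := pw6 hpw
  refine ⟨hB, hA, adjacent_symm hC,
    pw6' n10 n2.symm n6.symm n12 n11 n3.symm n7.symm n14 n13 n1 n5 n4 n9 n8 n15.symm,
    ?_, ?_, ?_, ?_⟩
  · rw [Sym2.eq_swap]; exact hm1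
  · exact hm3
  · exact hm2
  · rw [Equiv.swap_comm c₂ c₁, swap_commute n2.symm n6.symm n3.symm n7.symm]
    exact heq

set_option maxHeartbeats 1000000 in
lemma relabel23 {n : ℕ} {D D' : ChordDiagram n} {a₁ a₂ b₁ b₂ c₁ c₂ : Fin (2*n)}
    (htm : TripleMoveAt D D' a₁ a₂ b₁ b₂ c₁ c₂) :
    TripleMoveAt D D' c₁ c₂ a₂ a₁ b₂ b₁ := by
  obtain ⟨hA, hB, hC, hpw, hm1, hm2, hm3, heq⟩ := htm
  obtain ⟨n1,n2,n3,n4,n5,n6,n7,n8,n9,n10,n11,n12,n13,n14,n15⟩ := pw6 hpw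
  refine ⟨hC, adjacent_symm hA, adjacent_symm hB,
    pw6' n15 n8.symm n4.symm n13.symm n11.symm n9.symm n5.symm n14.symm n12.symm
      n1.symm n7 n6 n3 n2 n10.symm,
    ?_, ?_, ?_, ?_⟩
  · rw [Sym2.eq_swap]; exact hm2
  · rw [Sym2.eq_swap]; exact hm3
  · exact hm1
  · rw [Equiv.swap_comm a₂ a₁, Equiv.swap_comm b₂ b₁,
      swap_commute n4.symm n8.symm n5.symm n9.symm, mul_assoc,
      swap_commute n11.symm n13.symm n12.symm n14.symm, ← mul_assoc]
    exact heq

lemma eq_pattern12 {n : ℕ} {D D' : ChordDiagram n} {a₁ a₂ b₁ b₂ c₁ c₂ : Fin (2*n)}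
    (htm : TripleMoveAt D D' a₁ a₂ b₁ b₂ c₁ c₂)
    (h12 : Crosses s(a₁,b₁) s(a₂,c₁)) (h13 : ¬ Crosses s(a₁,b₁) s(b₂,c₂))
    (h23 : ¬ Crosses s(a₂,c₁) s(b₂,c₂)) : tr D' = tr D := by
  have hcopy := htm
  obtain ⟨hA, hB, hC, hpw, hm1, hm2, hm3, heq⟩ := hcopy
  obtain ⟨n1,n2,n3,n4,n5,n6,n7,n8,n9,n10,n11,n12,n13,n14,n15⟩ := pw6 hpw
  have t1 := tri1_fin hA hB hC n1 n2 n3 n4 n5 n6 n7 n8 n9 n10 n11 n12 n13 n14 n15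
  have t2 := tri2_fin hA hB hC n1 n2 n3 n4 n5 n6 n7 n8 n9 n10 n11 n12 n13 n14 n15
  have t3 := tri3_fin hA hB hC n1 n2 n3 n4 n5 n6 n7 n8 n9 n10 n11 n12 n13 n14 n15
  refine le_antisymm (core_main htm (Or.inl ⟨h12, h13, h23⟩))
    (core_main (tm_symm htm) (Or.inr ⟨?_, ?_, ?_⟩))
  · exact t1.mp h12
  · tauto
  · tauto

lemma eq_one {n : ℕ} {D D' : ChordDiagram n} {a₁ a₂ b₁ b₂ c₁ c₂ : Fin (2*n)}
    (htm : TripleMoveAt D D' a₁ a₂ b₁ b₂ c₁ c₂)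
    (hone : ExactlyOneCross s(a₁,b₁) s(a₂,c₁) s(b₂,c₂)) : tr D' = tr D := by
  rcases hone with ⟨h12,h13,h23⟩|⟨h12,h13,h23⟩|⟨h12,h13,h23⟩
  · exact eq_pattern12 htm h12 h13 h23
  · refine eq_pattern12 (relabel13 htm) ?_ ?_ ?_
    · rw [Sym2.eq_swap (a := b₁) (b := a₁)]; exact h13
    · rw [Sym2.eq_swap (a := b₁) (b := a₁)]; exact h12
    · exact fun hcr => h23 (crosses_symm hcr)
  · refine eq_pattern12 (relabel23 htm) ?_ ?_ ?_
    · rw [Sym2.eq_swap (a := c₁) (b := a₂), Sym2.eq_swap (a := c₂) (b := b₂)]; exact h23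
    · rw [Sym2.eq_swap (a := c₁) (b := a₂)]
      exact fun hcr => h12 (crosses_symm hcr)
    · rw [Sym2.eq_swap (a := c₂) (b := b₂)]
      exact fun hcr => h13 (crosses_symm hcr)


/-- Theorem 1(2): the trivializing number is invariant under a
weak third move. -/
theorem tr_invariant_of_weakThirdMove {n : ℕ} (D D' : ChordDiagram n)
    (h : WeakThirdMove D D') :
    tr D' = tr D := by
  obtain ⟨a₁, a₂, b₁, b₂, c₁, c₂, htm, hone⟩ := h
  rcases hone with hone | hone
  · exact eq_one htm hone
  · exact (eq_one (tm_symm htm) hone).symm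
end

section
/- Let D be a chord diagram and let D' be obtained from D by a strong third move whose three distinguished chords pairwise cross in D, and suppose that tr(D) and tr(D') are both even (as holds for chord diagrams of knot projections by a theorem of Hanaki). Then tr(D) = tr(D') or tr(D) = tr(D') + 2. (Theorem 1(3): a strong third move leaves the trivializing number invariant or changes it by exactly 2.) -/
open scoped Classical

section Aux

lemma crosses_iff_s3 {N : ℕ} (p q u v : Fin N) :
    Crosses s(p, q) s(u, v) ↔
      (p < u ∧ u < q ∧ q < v) ∨ (u < p ∧ p < v ∧ v < q) ∨
      (q < u ∧ u < p ∧ p < v) ∨ (u < q ∧ q < v ∧ v < p) ∨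
      (p < v ∧ v < q ∧ q < u) ∨ (v < p ∧ p < u ∧ u < q) ∨
      (q < v ∧ v < p ∧ p < u) ∨ (v < q ∧ q < u ∧ u < p) := by
  constructor
  · rintro ⟨a, b, x, y, h1, h2, h3, (⟨hc, hd⟩ | ⟨hc, hd⟩)⟩ <;>
      rw [Sym2.eq_iff] at hc hd <;>
      rcases hc with ⟨rfl, rfl⟩ | ⟨rfl, rfl⟩ <;>
      rcases hd with ⟨rfl, rfl⟩ | ⟨rfl, rfl⟩ <;>
      simp only [Fin.lt_def] at h1 h2 h3 ⊢ <;> omega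
  · rintro (⟨h1, h2, h3⟩ | ⟨h1, h2, h3⟩ | ⟨h1, h2, h3⟩ | ⟨h1, h2, h3⟩ |
      ⟨h1, h2, h3⟩ | ⟨h1, h2, h3⟩ | ⟨h1, h2, h3⟩ | ⟨h1, h2, h3⟩)
    · exact ⟨p, q, u, v, h1, h2, h3, Or.inl ⟨rfl, rfl⟩⟩
    · exact ⟨u, v, p, q, h1, h2, h3, Or.inr ⟨rfl, rfl⟩⟩
    · exact ⟨q, p, u, v, h1, h2, h3, Or.inl ⟨Sym2.eq_swap, rfl⟩⟩
    · exact ⟨u, v, q, p, h1, h2, h3, Or.inr ⟨Sym2.eq_swap, rfl⟩⟩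
    · exact ⟨p, q, v, u, h1, h2, h3, Or.inl ⟨rfl, Sym2.eq_swap⟩⟩
    · exact ⟨v, u, p, q, h1, h2, h3, Or.inr ⟨rfl, Sym2.eq_swap⟩⟩
    · exact ⟨q, p, v, u, h1, h2, h3, Or.inl ⟨Sym2.eq_swap, Sym2.eq_swap⟩⟩
    · exact ⟨v, u, q, p, h1, h2, h3, Or.inr ⟨Sym2.eq_swap, Sym2.eq_swap⟩⟩

lemma crosses_iff_of_lt {N : ℕ} {p q u v : Fin N} (hpq : p < q) (huv : u < v) :
    Crosses s(p, q) s(u, v) ↔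
      ((p < u ∧ u < q ∧ q < v) ∨ (u < p ∧ p < v ∧ v < q)) := by
  rw [crosses_iff_s3]
  simp only [Fin.lt_def] at *
  omega

lemma crosses_congr_aux {N : ℕ} {p p' q u v : Fin N} (hadj : Adjacent p p')
    (h1 : u ≠ p) (h2 : u ≠ p') (h3 : v ≠ p) (h4 : v ≠ p')
    (h5 : q ≠ p) (h6 : q ≠ p') (h7 : q ≠ u) (h8 : q ≠ v) (huv : u < v) :
    Crosses s(p, q) s(u, v) ↔ Crosses s(p', q) s(u, v) := by
  have hv : ∀ a b : Fin N, a ≠ b → (a : ℕ) ≠ b := fun a b hab h => hab (Fin.ext h)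
  have bp := p.isLt; have bp' := p'.isLt; have bq := q.isLt
  have bu := u.isLt; have bv := v.isLt
  have key : p'.val = p.val + 1 ∨ (p.val + 1 = N ∧ p'.val = 0) ∨
      p.val = p'.val + 1 ∨ (p'.val + 1 = N ∧ p.val = 0) := by
    rcases hadj with h | h
    · rcases Nat.lt_or_ge (p.val + 1) N with hl | hg
      · rw [Nat.mod_eq_of_lt hl] at h; omega
      · have he : p.val + 1 = N := by omega
        rw [he, Nat.mod_self] at h; omega
    · rcases Nat.lt_or_ge (p'.val + 1) N with hl | hg
      · rw [Nat.mod_eq_of_lt hl] at h; omega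
      · have he : p'.val + 1 = N := by omega
        rw [he, Nat.mod_self] at h; omega
  have n1 := hv _ _ h1; have n2 := hv _ _ h2; have n3 := hv _ _ h3
  have n4 := hv _ _ h4; have n5 := hv _ _ h5; have n6 := hv _ _ h6
  have n7 := hv _ _ h7; have n8 := hv _ _ h8
  have e1 : s(p, q) = s(q, p) := Sym2.eq_swap
  have e2 : s(p', q) = s(q, p') := Sym2.eq_swap
  rcases lt_trichotomy p q with hpq | hpq | hpq
  · rcases lt_trichotomy p' q with hp'q | hp'q | hp'q
    · rw [crosses_iff_of_lt hpq huv, crosses_iff_of_lt hp'q huv]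
      simp only [Fin.lt_def] at *
      omega
    · exact absurd hp'q.symm h6
    · rw [crosses_iff_of_lt hpq huv, e2, crosses_iff_of_lt hp'q huv]
      simp only [Fin.lt_def] at *
      omega
  · exact absurd hpq.symm h5
  · rcases lt_trichotomy p' q with hp'q | hp'q | hp'q
    · rw [e1, crosses_iff_of_lt hpq huv, crosses_iff_of_lt hp'q huv]
      simp only [Fin.lt_def] at *
      omega
    · exact absurd hp'q.symm h6
    · rw [e1, crosses_iff_of_lt hpq huv, e2, crosses_iff_of_lt hp'q huv]
      simp only [Fin.lt_def] at *
      omega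

lemma crosses_congr {N : ℕ} {p p' q u v : Fin N} (hadj : Adjacent p p')
    (h1 : u ≠ p) (h2 : u ≠ p') (h3 : v ≠ p) (h4 : v ≠ p')
    (h5 : q ≠ p) (h6 : q ≠ p') (h7 : q ≠ u) (h8 : q ≠ v) (h9 : u ≠ v) :
    Crosses s(p, q) s(u, v) ↔ Crosses s(p', q) s(u, v) := by
  rcases lt_trichotomy u v with huv | huv | huv
  · exact crosses_congr_aux hadj h1 h2 h3 h4 h5 h6 h7 h8 huv
  · exact absurd huv h9
  · have e : s(u, v) = s(v, u) := Sym2.eq_swap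
    rw [e]
    exact crosses_congr_aux hadj h3 h4 h1 h2 h5 h6 h8 h7 huv

lemma cross_move {N : ℕ} {p p' q q' : Fin N} (e : Sym2 (Fin N))
    (hpp : Adjacent p p') (hqq : Adjacent q q')
    (d2 : p ≠ q) (d3 : p ≠ q') (d4 : p' ≠ q) (d5 : p' ≠ q')
    (hnd : ¬ e.IsDiag)
    (he : ∀ x ∈ e, x ≠ p ∧ x ≠ p' ∧ x ≠ q ∧ x ≠ q') :
    Crosses s(p, q) e ↔ Crosses s(p', q') e := by
  revert hnd he
  induction e using Sym2.ind with
  | _ u v =>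
    intro hnd he
    obtain ⟨hu1, hu2, hu3, hu4⟩ := he u (Sym2.mem_mk_left u v)
    obtain ⟨hv1, hv2, hv3, hv4⟩ := he v (Sym2.mem_mk_right u v)
    have huv : u ≠ v := fun h => hnd (Sym2.mk_isDiag_iff.mpr h)
    have step1 := crosses_congr (u := u) (v := v) hpp hu1 hu2 hv1 hv2
      d2.symm d4.symm hu3.symm hv3.symm huv
    have e1 : s(p', q) = s(q, p') := Sym2.eq_swap
    have step2 := crosses_congr (u := u) (v := v) hqq hu3 hu4 hv3 hv4
      d4 d5 hu2.symm hv2.symm huv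
    have e2 : s(q', p') = s(p', q') := Sym2.eq_swap
    rw [step1, e1, step2, e2]

end Aux

/-- Theorem 1(3): a strong third move whose three distinguished
chords pairwise cross in `D` leaves the (even) trivializing number invariant or
changes it by exactly `2`. -/
theorem tr_eq_or_eq_add_two_of_strongThirdMove {n : ℕ} (D D' : ChordDiagram n)
    (h : ∃ a₁ a₂ b₁ b₂ c₁ c₂, TripleMoveAt D D' a₁ a₂ b₁ b₂ c₁ c₂ ∧
      PairwiseCross s(a₁, b₁) s(a₂, c₁) s(b₂, c₂))
    (hD : Even (tr D)) (hD' : Even (tr D')) :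
    tr D = tr D' ∨ tr D = tr D' + 2 := by
  classical
  obtain ⟨a₁, a₂, b₁, b₂, c₁, c₂, ⟨hA, hB, hC, hdist, hm1, hm2, hm3, himg⟩,
    hX12, hX13, hX23⟩ := h
  simp only [List.pairwise_cons, List.mem_cons, List.mem_singleton,
    List.not_mem_nil, forall_eq_or_imp, forall_eq] at hdist
  obtain ⟨⟨n12, n13, n14, n15, n16, -⟩, ⟨n23, n24, n25, n26, -⟩,
    ⟨n34, n35, n36, -⟩, ⟨n45, n46, -⟩, ⟨n56, -⟩, -, -⟩ := hdist
  set π : Equiv.Perm (Fin (2 * n)) :=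
    Equiv.swap a₁ a₂ * Equiv.swap b₁ b₂ * Equiv.swap c₁ c₂ with hπ
  have hπdef : ∀ x, π x = Equiv.swap a₁ a₂ (Equiv.swap b₁ b₂ (Equiv.swap c₁ c₂ x)) :=
    fun x => rfl
  have ea1 : π a₁ = a₂ := by
    rw [hπdef, Equiv.swap_apply_of_ne_of_ne n15 n16,
      Equiv.swap_apply_of_ne_of_ne n13 n14, Equiv.swap_apply_left]
  have ea2 : π a₂ = a₁ := by
    rw [hπdef, Equiv.swap_apply_of_ne_of_ne n25 n26,
      Equiv.swap_apply_of_ne_of_ne n23 n24, Equiv.swap_apply_right]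
  have eb1 : π b₁ = b₂ := by
    rw [hπdef, Equiv.swap_apply_of_ne_of_ne n35 n36, Equiv.swap_apply_left,
      Equiv.swap_apply_of_ne_of_ne (Ne.symm n14) (Ne.symm n24)]
  have eb2 : π b₂ = b₁ := by
    rw [hπdef, Equiv.swap_apply_of_ne_of_ne n45 n46, Equiv.swap_apply_right,
      Equiv.swap_apply_of_ne_of_ne (Ne.symm n13) (Ne.symm n23)]
  have ec1 : π c₁ = c₂ := by
    rw [hπdef, Equiv.swap_apply_left,
      Equiv.swap_apply_of_ne_of_ne (Ne.symm n36) (Ne.symm n46),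
      Equiv.swap_apply_of_ne_of_ne (Ne.symm n16) (Ne.symm n26)]
  have ec2 : π c₂ = c₁ := by
    rw [hπdef, Equiv.swap_apply_right,
      Equiv.swap_apply_of_ne_of_ne (Ne.symm n35) (Ne.symm n45),
      Equiv.swap_apply_of_ne_of_ne (Ne.symm n15) (Ne.symm n25)]
  have efix : ∀ x, x ≠ a₁ → x ≠ a₂ → x ≠ b₁ → x ≠ b₂ → x ≠ c₁ → x ≠ c₂ → π x = x := by
    intro x g1 g2 g3 g4 g5 g6
    rw [hπdef, Equiv.swap_apply_of_ne_of_ne g5 g6,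
      Equiv.swap_apply_of_ne_of_ne g3 g4, Equiv.swap_apply_of_ne_of_ne g1 g2]
  have hππ : ∀ x, π (π x) = x := by
    intro x
    by_cases hx1 : x = a₁
    · rw [hx1, ea1, ea2]
    by_cases hx2 : x = a₂
    · rw [hx2, ea2, ea1]
    by_cases hx3 : x = b₁
    · rw [hx3, eb1, eb2]
    by_cases hx4 : x = b₂
    · rw [hx4, eb2, eb1]
    by_cases hx5 : x = c₁
    · rw [hx5, ec1, ec2]
    by_cases hx6 : x = c₂
    · rw [hx6, ec2, ec1]
    rw [efix x hx1 hx2 hx3 hx4 hx5 hx6, efix x hx1 hx2 hx3 hx4 hx5 hx6]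
  have hfinj : Function.Injective (Sym2.map π) := Sym2.map.injective π.injective
  have hff : ∀ e : Sym2 (Fin (2 * n)), Sym2.map π (Sym2.map π e) = e := by
    intro e
    rw [Sym2.map_map]
    have hc : (π : Fin (2 * n) → Fin (2 * n)) ∘ π = id := funext hππ
    rw [hc, Sym2.map_id, id_eq]
  have himg' : D'.chords.image (Sym2.map π) = D.chords := by
    rw [himg, Finset.image_image]
    have hc : Sym2.map (π : Fin (2 * n) → Fin (2 * n)) ∘ Sym2.map π = id := funext hff
    rw [hc, Finset.image_id]
  have hmapch1 : Sym2.map π s(a₁, b₁) = s(a₂, b₂) := by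
    rw [Sym2.map_pair_eq, ea1, eb1]
  have hmapch2 : Sym2.map π s(a₂, c₁) = s(a₁, c₂) := by
    rw [Sym2.map_pair_eq, ea2, ec1]
  have hmapch3 : Sym2.map π s(b₂, c₂) = s(b₁, c₁) := by
    rw [Sym2.map_pair_eq, eb2, ec2]
  have havoid : ∀ e ∈ D.chords, e ≠ s(a₁, b₁) → e ≠ s(a₂, c₁) → e ≠ s(b₂, c₂) →
      ∀ x ∈ e, x ≠ a₁ ∧ x ≠ a₂ ∧ x ≠ b₁ ∧ x ≠ b₂ ∧ x ≠ c₁ ∧ x ≠ c₂ := by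
    intro e he h1 h2 h3 x hx
    refine ⟨?_, ?_, ?_, ?_, ?_, ?_⟩ <;> rintro rfl
    · exact h1 ((D.cover x).unique ⟨he, hx⟩ ⟨hm1, Sym2.mem_mk_left _ _⟩)
    · exact h2 ((D.cover x).unique ⟨he, hx⟩ ⟨hm2, Sym2.mem_mk_left _ _⟩)
    · exact h1 ((D.cover x).unique ⟨he, hx⟩ ⟨hm1, Sym2.mem_mk_right _ _⟩)
    · exact h3 ((D.cover x).unique ⟨he, hx⟩ ⟨hm3, Sym2.mem_mk_left _ _⟩)
    · exact h2 ((D.cover x).unique ⟨he, hx⟩ ⟨hm2, Sym2.mem_mk_right _ _⟩)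
    · exact h3 ((D.cover x).unique ⟨he, hx⟩ ⟨hm3, Sym2.mem_mk_right _ _⟩)
  have hfixaux : ∀ e : Sym2 (Fin (2 * n)),
      (∀ x ∈ e, x ≠ a₁ ∧ x ≠ a₂ ∧ x ≠ b₁ ∧ x ≠ b₂ ∧ x ≠ c₁ ∧ x ≠ c₂) →
      Sym2.map π e = e := by
    intro e
    induction e using Sym2.ind with
    | _ u v =>
      intro hh
      obtain ⟨g1, g2, g3, g4, g5, g6⟩ := hh u (Sym2.mem_mk_left u v)
      obtain ⟨k1, k2, k3, k4, k5, k6⟩ := hh v (Sym2.mem_mk_right u v)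
      rw [Sym2.map_pair_eq, efix u g1 g2 g3 g4 g5 g6, efix v k1 k2 k3 k4 k5 k6]
  have hfixed : ∀ e ∈ D.chords, e ≠ s(a₁, b₁) → e ≠ s(a₂, c₁) → e ≠ s(b₂, c₂) →
      Sym2.map π e = e := fun e he h1 h2 h3 => hfixaux e (havoid e he h1 h2 h3)
  have hBsymm : Adjacent b₂ b₁ := Or.symm hB
  have hCsymm : Adjacent c₂ c₁ := Or.symm hC
  have hAsymm : Adjacent a₂ a₁ := Or.symm hA
  have hmove1 : ∀ e ∈ D.chords, e ≠ s(a₁, b₁) → e ≠ s(a₂, c₁) → e ≠ s(b₂, c₂) →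
      (Crosses s(a₁, b₁) e ↔ Crosses s(a₂, b₂) e) := by
    intro e he h1 h2 h3
    have hav := havoid e he h1 h2 h3
    exact cross_move e hA hB n13 n14 n23 n24 (D.not_diag e he)
      (fun x hx => ⟨(hav x hx).1, (hav x hx).2.1, (hav x hx).2.2.1, (hav x hx).2.2.2.1⟩)
  have hmove2 : ∀ e ∈ D.chords, e ≠ s(a₁, b₁) → e ≠ s(a₂, c₁) → e ≠ s(b₂, c₂) →
      (Crosses s(a₂, c₁) e ↔ Crosses s(a₁, c₂) e) := by
    intro e he h1 h2 h3
    have hav := havoid e he h1 h2 h3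
    exact cross_move e hAsymm hC n25 n26 n15 n16 (D.not_diag e he)
      (fun x hx => ⟨(hav x hx).2.1, (hav x hx).1, (hav x hx).2.2.2.2.1, (hav x hx).2.2.2.2.2⟩)
  have hmove3 : ∀ e ∈ D.chords, e ≠ s(a₁, b₁) → e ≠ s(a₂, c₁) → e ≠ s(b₂, c₂) →
      (Crosses s(b₂, c₂) e ↔ Crosses s(b₁, c₁) e) := by
    intro e he h1 h2 h3
    have hav := havoid e he h1 h2 h3
    exact cross_move e hBsymm hCsymm n46 n45 n36 n35 (D.not_diag e he)
      (fun x hx => ⟨(hav x hx).2.2.2.1, (hav x hx).2.2.1, (hav x hx).2.2.2.2.2, (hav x hx).2.2.2.2.1⟩)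
  -- trivializing sets exist
  have hneD : {k | ∃ S ⊆ D.chords, S.card = k ∧
      ∀ c ∈ D.chords \ S, ∀ d ∈ D.chords \ S, ¬ Crosses c d}.Nonempty :=
    ⟨D.chords.card, D.chords, Finset.Subset.refl _, rfl, by simp⟩
  have hneD' : {k | ∃ S ⊆ D'.chords, S.card = k ∧
      ∀ c ∈ D'.chords \ S, ∀ d ∈ D'.chords \ S, ¬ Crosses c d}.Nonempty :=
    ⟨D'.chords.card, D'.chords, Finset.Subset.refl _, rfl, by simp⟩
  obtain ⟨S, hSsub, hScard, hStriv⟩ : ∃ S ⊆ D.chords, S.card = tr D ∧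
      ∀ c ∈ D.chords \ S, ∀ d ∈ D.chords \ S, ¬ Crosses c d := Nat.sInf_mem hneD
  obtain ⟨S', hS'sub, hS'card, hS'triv⟩ : ∃ S' ⊆ D'.chords, S'.card = tr D' ∧
      ∀ c ∈ D'.chords \ S', ∀ d ∈ D'.chords \ S', ¬ Crosses c d := Nat.sInf_mem hneD'
  -- direction 1 : tr D' ≤ tr D
  have hle1 : tr D' ≤ tr D := by
    apply Nat.sInf_le
    refine ⟨S.image (Sym2.map π), by rw [himg]; exact Finset.image_subset_image hSsub,
      by rw [Finset.card_image_of_injective S hfinj, hScard], ?_⟩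
    intro c' hc' d' hd'
    rw [himg, ← Finset.image_sdiff D.chords S hfinj] at hc' hd'
    obtain ⟨c, hc, rfl⟩ := Finset.mem_image.mp hc'
    obtain ⟨d, hd, rfl⟩ := Finset.mem_image.mp hd'
    by_cases hcD : c = s(a₁, b₁) ∨ c = s(a₂, c₁) ∨ c = s(b₂, c₂)
    · by_cases hdD : d = s(a₁, b₁) ∨ d = s(a₂, c₁) ∨ d = s(b₂, c₂)
      · rcases hcD with rfl | rfl | rfl <;> rcases hdD with rfl | rfl | rfl
        · exact not_crosses_self _
        · exact fun _ => hStriv _ hc _ hd hX12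
        · exact fun _ => hStriv _ hc _ hd hX13
        · exact fun _ => hStriv _ hc _ hd (crosses_symm hX12)
        · exact not_crosses_self _
        · exact fun _ => hStriv _ hc _ hd hX23
        · exact fun _ => hStriv _ hc _ hd (crosses_symm hX13)
        · exact fun _ => hStriv _ hc _ hd (crosses_symm hX23)
        · exact not_crosses_self _
      · push_neg at hdD
        obtain ⟨hd1, hd2, hd3⟩ := hdD
        have hdmem : d ∈ D.chords := (Finset.mem_sdiff.mp hd).1
        rw [hfixed d hdmem hd1 hd2 hd3]
        rcases hcD with rfl | rfl | rfl
        · rw [hmapch1]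
          exact fun hx => hStriv _ hc _ hd ((hmove1 d hdmem hd1 hd2 hd3).mpr hx)
        · rw [hmapch2]
          exact fun hx => hStriv _ hc _ hd ((hmove2 d hdmem hd1 hd2 hd3).mpr hx)
        · rw [hmapch3]
          exact fun hx => hStriv _ hc _ hd ((hmove3 d hdmem hd1 hd2 hd3).mpr hx)
    · push_neg at hcD
      obtain ⟨hc1, hc2, hc3⟩ := hcD
      have hcmem : c ∈ D.chords := (Finset.mem_sdiff.mp hc).1
      rw [hfixed c hcmem hc1 hc2 hc3]
      by_cases hdD : d = s(a₁, b₁) ∨ d = s(a₂, c₁) ∨ d = s(b₂, c₂)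
      · rcases hdD with rfl | rfl | rfl
        · rw [hmapch1]
          exact fun hx => hStriv _ hd _ hc
            ((hmove1 c hcmem hc1 hc2 hc3).mpr (crosses_symm hx))
        · rw [hmapch2]
          exact fun hx => hStriv _ hd _ hc
            ((hmove2 c hcmem hc1 hc2 hc3).mpr (crosses_symm hx))
        · rw [hmapch3]
          exact fun hx => hStriv _ hd _ hc
            ((hmove3 c hcmem hc1 hc2 hc3).mpr (crosses_symm hx))
      · push_neg at hdD
        obtain ⟨hd1, hd2, hd3⟩ := hdD
        have hdmem : d ∈ D.chords := (Finset.mem_sdiff.mp hd).1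
        rw [hfixed d hdmem hd1 hd2 hd3]
        exact hStriv _ hc _ hd
  -- direction 2 : tr D ≤ tr D' + 2
  have hle2 : tr D ≤ tr D' + 2 := by
    have hTsub : S'.image (Sym2.map π) ⊆ D.chords := by
      rw [← himg']
      exact Finset.image_subset_image hS'sub
    have hSsub2 : S'.image (Sym2.map π) ∪ {s(a₁, b₁), s(a₂, c₁)} ⊆ D.chords := by
      refine Finset.union_subset hTsub ?_
      intro x hx
      rcases Finset.mem_insert.mp hx with rfl | hx
      · exact hm1
      · rw [Finset.mem_singleton] at hx
        rw [hx]
        exact hm2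
    have hcard : (S'.image (Sym2.map π) ∪ {s(a₁, b₁), s(a₂, c₁)}).card ≤ tr D' + 2 := by
      have h1 := Finset.card_union_le (S'.image (Sym2.map π))
        ({s(a₁, b₁), s(a₂, c₁)} : Finset (Sym2 (Fin (2 * n))))
      have h2 : ({s(a₁, b₁), s(a₂, c₁)} : Finset (Sym2 (Fin (2 * n)))).card ≤ 2 :=
        Finset.card_le_two
      rw [Finset.card_image_of_injective S' hfinj, hS'card] at h1
      omega
    have htriv2 : ∀ c ∈ D.chords \ (S'.image (Sym2.map π) ∪ {s(a₁, b₁), s(a₂, c₁)}),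
        ∀ d ∈ D.chords \ (S'.image (Sym2.map π) ∪ {s(a₁, b₁), s(a₂, c₁)}),
        ¬ Crosses c d := by
      intro c hc d hd
      obtain ⟨hcmem, hcS⟩ := Finset.mem_sdiff.mp hc
      obtain ⟨hdmem, hdS⟩ := Finset.mem_sdiff.mp hd
      have hc1 : c ≠ s(a₁, b₁) := by
        rintro rfl
        exact hcS (Finset.mem_union_right _ (Finset.mem_insert_self _ _))
      have hc2 : c ≠ s(a₂, c₁) := by
        rintro rfl
        exact hcS (Finset.mem_union_right _
          (Finset.mem_insert_of_mem (Finset.mem_singleton_self _)))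
      have hd1 : d ≠ s(a₁, b₁) := by
        rintro rfl
        exact hdS (Finset.mem_union_right _ (Finset.mem_insert_self _ _))
      have hd2 : d ≠ s(a₂, c₁) := by
        rintro rfl
        exact hdS (Finset.mem_union_right _
          (Finset.mem_insert_of_mem (Finset.mem_singleton_self _)))
      have hcT : c ∉ S'.image (Sym2.map π) := fun hh => hcS (Finset.mem_union_left _ hh)
      have hdT : d ∉ S'.image (Sym2.map π) := fun hh => hdS (Finset.mem_union_left _ hh)
      have hc0 : Sym2.map π c ∈ D'.chords \ S' := by
        rw [Finset.mem_sdiff]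
        refine ⟨by rw [himg]; exact Finset.mem_image_of_mem _ hcmem, ?_⟩
        intro hmem
        apply hcT
        have : c = Sym2.map π (Sym2.map π c) := (hff c).symm
        rw [this]
        exact Finset.mem_image_of_mem _ hmem
      have hd0 : Sym2.map π d ∈ D'.chords \ S' := by
        rw [Finset.mem_sdiff]
        refine ⟨by rw [himg]; exact Finset.mem_image_of_mem _ hdmem, ?_⟩
        intro hmem
        apply hdT
        have : d = Sym2.map π (Sym2.map π d) := (hff d).symm
        rw [this]
        exact Finset.mem_image_of_mem _ hmem
      by_cases hc3 : c = s(b₂, c₂)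
      · by_cases hd3 : d = s(b₂, c₂)
        · rw [hc3, hd3]
          exact not_crosses_self _
        · subst hc3
          have hdfix : Sym2.map π d = d := hfixed d hdmem hd1 hd2 hd3
          have hnc := hS'triv _ hc0 _ hd0
          rw [hmapch3, hdfix] at hnc
          exact fun hx => hnc ((hmove3 d hdmem hd1 hd2 hd3).mp hx)
      · by_cases hd3 : d = s(b₂, c₂)
        · subst hd3
          have hcfix : Sym2.map π c = c := hfixed c hcmem hc1 hc2 hc3
          have hnc := hS'triv _ hd0 _ hc0
          rw [hmapch3, hcfix] at hnc
          exact fun hx => hnc ((hmove3 c hcmem hc1 hc2 hc3).mp (crosses_symm hx))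
        · have hcfix : Sym2.map π c = c := hfixed c hcmem hc1 hc2 hc3
          have hdfix : Sym2.map π d = d := hfixed d hdmem hd1 hd2 hd3
          have hnc := hS'triv _ hc0 _ hd0
          rw [hcfix, hdfix] at hnc
          exact hnc
    have hmem2 : tr D ≤ (S'.image (Sym2.map π) ∪ {s(a₁, b₁), s(a₂, c₁)}).card :=
      Nat.sInf_le ⟨_, hSsub2, rfl, htriv2⟩
    omega
  obtain ⟨k, hk⟩ := hD
  obtain ⟨m, hm⟩ := hD'
  omega
end
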